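/- arXiv:2307.03106 — 9 statements merged into one kernel-verified Lean document; each statement's English description precedes it below -/
import Mathlib

section
/- Let G be a group generated by two elements x and y. Suppose that for every non-trivial reduced word w in the free group of rank 2 whose length is at most 21, the evaluation w(x,y) is not the identity of G (equivalently, the Cayley graph of G with respect to {x,y} has girth greater than 21). Then, with S = {e, x, x², x⁴, y, y³}, the Cayley poset P(G,S) is a Cayley representation of G; in particular G admits a Cayley representation. -/
variable {G : Type*}

/-- The order relation of the Cayley poset `P(G,S)`: the underlying set is the disjoint
union of two copies of `G` (`Sum.inl g` is written `g`, `Sum.inr h` is written `h'`),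
with `g < h'` iff `g⁻¹ * h ∈ S`, and no other distinct elements comparable. -/
def cayleyLE [Group G] (S : Set G) : G ⊕ G → G ⊕ G → Prop
  | Sum.inl g, Sum.inl h => g = h
  | Sum.inl g, Sum.inr h => g⁻¹ * h ∈ S
  | Sum.inr _, Sum.inl _ => False
  | Sum.inr g, Sum.inr h => g = h

/-- The Cayley poset `P(G,S)` as a type synonym for `G ⊕ G`. -/
def CayleyPoset (G : Type*) [Group G] (S : Set G) : Type _ := G ⊕ G

instance [Group G] (S : Set G) : PartialOrder (CayleyPoset G S) where
  le x y := cayleyLE S x y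
  le_refl x := by cases x <;> exact rfl
  le_trans x y z hxy hyz := by
    cases x <;> cases y <;> cases z <;> simp_all [cayleyLE]
  le_antisymm x y hxy hyx := by
    cases x <;> cases y <;> simp_all [cayleyLE] <;> subst_vars <;> rfl

/-- The map `L(g)` on `P(G,S)`: `h ↦ g*h` on minimal points and `h' ↦ (g*h)'` on
maximal points. -/
def cayleyL [Group G] (g : G) : G ⊕ G → G ⊕ G
  | Sum.inl h => Sum.inl (g * h)
  | Sum.inr h => Sum.inr (g * h)

/-- `P(G,S)` is a Cayley representation of `G` if every order automorphism of the
Cayley poset `P(G,S)` equals `L(g)` for some `g ∈ G`. -/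
def IsCayleyRep (G : Type*) [Group G] (S : Set G) : Prop :=
  ∀ φ : CayleyPoset G S ≃o CayleyPoset G S,
    ∃ g : G, ∀ p : CayleyPoset G S, φ p = cayleyL g p


/-!
An order automorphism `φ` of `P(G,S)` sends minimal points to minimal points and maximal points
to maximal points, say `g ↦ α g` and `h' ↦ (β h)'`. Below a maximal point `p'` lie the six
minimal points `p s⁻¹`, `s ∈ S`, and two of them are *linked* when they have two common upper
bounds; the number of points below `p'` linked to a given one is an order invariant. The girth
hypothesis makes the poset near `p'` a faithful copy of the Cayley poset of the free group on
the words `1, a, a², a⁴, b, b³`, where these numbers are `3, 3, 4, 2, 1, 1`. Hence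
`α (p x⁻²) = β p x⁻²`, `α (p x⁻⁴) = β p x⁻⁴`, and `α` can only swap `{p, p x⁻¹}` and
`{p y⁻¹, p y⁻³}` among themselves. The first two equations give `α = β`, the swap of `p` and
`p x⁻¹` would force `x = 1`, and a swap on the `y`-pair, propagated along `p, p y⁻¹, p y⁻²`,
gives a relation `y ^ k = 1` with `k ≤ 8`. So `α` commutes with right multiplication by the
generators, hence by all of `G`, and `φ = L(α 1)`.
-/

open Pointwise Set Function

/-- In `P(G,S)`, `linkDegree c p'` counts the `c'` below `p'` with `|cS ∩ c'S| ≥ 2`. -/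
noncomputable def linkDegree {P : Type*} [Preorder P] (a b : P) : ℕ :=
  {z | z < b ∧ (Ioi a ∩ Ioi z).Nontrivial}.ncard

theorem OrderIso.linkDegree_apply {P Q : Type*} [Preorder P] [Preorder Q] (φ : P ≃o Q)
    (a b : P) : linkDegree (φ a) (φ b) = linkDegree a b := by
  have hlink : ∀ z, (Ioi (φ a) ∩ Ioi (φ z)).Nontrivial ↔ (Ioi a ∩ Ioi z).Nontrivial := by
    intro z
    rw [← φ.image_Ioi, ← φ.image_Ioi, ← image_inter φ.injective]
    exact ⟨nontrivial_of_image _ _, fun h => h.image φ.injective⟩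
  have himage : {z | z < φ b ∧ (Ioi (φ a) ∩ Ioi z).Nontrivial} =
      φ '' {z | z < b ∧ (Ioi a ∩ Ioi z).Nontrivial} := by
    ext z
    obtain ⟨z, rfl⟩ := φ.surjective z
    simp only [mem_ofPred_eq, φ.lt_iff_lt, hlink, φ.injective.mem_set_image]
  rw [linkDegree, himage, ncard_image_of_injective _ φ.injective, linkDegree]

namespace CayleyPoset

variable [Group G] (S : Set G)

def low (g : G) : CayleyPoset G S := Sum.inl g

def high (h : G) : CayleyPoset G S := Sum.inr h

theorem low_injective : Injective (low S) := Sum.inl_injective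

theorem high_injective : Injective (high S) := Sum.inr_injective

variable {S}

theorem low_lt_high_iff {g h : G} : low S g < high S h ↔ g⁻¹ * h ∈ S :=
  ⟨fun hlt => hlt.1, fun hS => ⟨hS, fun hle => hle⟩⟩

theorem not_lt_low (z : CayleyPoset G S) (g : G) : ¬ z < low S g := by
  rcases z with h | h
  · exact fun hlt => hlt.2 (Eq.symm hlt.1)
  · exact fun hlt => hlt.1

theorem not_high_lt (h : G) (z : CayleyPoset G S) : ¬ high S h < z := by
  rcases z with g | g
  · exact fun hlt => hlt.1
  · exact fun hlt => hlt.2 (Eq.symm hlt.1)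

theorem exists_map_low (φ : CayleyPoset G S ≃o CayleyPoset G S) (hS : S.Nonempty) (g : G) :
    ∃ g', φ (low S g) = low S g' := by
  obtain ⟨s, hs⟩ := hS
  have hlt : low S g < high S (g * s) := low_lt_high_iff.mpr (by rwa [inv_mul_cancel_left])
  rcases hφ : φ (low S g) with g' | h
  · exact ⟨g', rfl⟩
  · exact absurd (hφ ▸ φ.lt_iff_lt.mpr hlt) (not_high_lt h _)

theorem exists_map_high (φ : CayleyPoset G S ≃o CayleyPoset G S) (hS : S.Nonempty) (h : G) :
    ∃ h', φ (high S h) = high S h' := by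
  obtain ⟨s, hs⟩ := hS
  have hlt : low S (h * s⁻¹) < high S h := low_lt_high_iff.mpr (by group; exact hs)
  rcases hφ : φ (high S h) with g | h'
  · exact absurd (hφ ▸ φ.lt_iff_lt.mpr hlt) (not_lt_low _ g)
  · exact ⟨h', rfl⟩

end CayleyPoset

/-- `linkDegree s⁻¹ 1'` in `P(H,T)`, computed inside the finite set `T`. -/
def modelDegree {H : Type*} [Group H] [DecidableEq H] (T : Finset H) (s : H) : ℕ :=
  (T.filter fun t => 1 < (s⁻¹ • T ∩ t⁻¹ • T).card).card

section LocalModel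

open CayleyPoset

variable {H : Type*} [Group H] [Group G] {π : H →* G} {T : Finset H}

theorem low_lt_high_image_iff {c p : G} :
    low (π '' T) c < high (π '' T) p ↔ ∃ t ∈ T, c = p * (π t)⁻¹ := by
  rw [low_lt_high_iff]
  constructor
  · rintro ⟨t, ht, hct⟩
    exact ⟨t, ht, by rw [hct]; group⟩
  · rintro ⟨t, ht, rfl⟩
    exact ⟨t, ht, by group⟩

variable [DecidableEq H]

theorem Finset.smul_finset_subset_inv_mul {s : H} (hs : s ∈ T) : s⁻¹ • T ⊆ T⁻¹ * T := by
  intro w hw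
  obtain ⟨u, hu, rfl⟩ := Finset.mem_smul_finset.mp hw
  exact Finset.mul_mem_mul (Finset.inv_mem_inv hs) hu

variable (hπ : InjOn π ↑(T⁻¹ * T))
include hπ

theorem injOn_of_injOn_inv_mul : InjOn π T := by
  intro t ht t' ht' h
  have hmem : ∀ {u}, u ∈ T → t⁻¹ * u ∈ T⁻¹ * T :=
    fun hu => Finset.mul_mem_mul (Finset.inv_mem_inv ht) hu
  exact mul_left_cancel (hπ (hmem ht) (hmem ht') (by simp [h]))

theorem Ioi_low_inter_Ioi_low (p : G) {s t : H} (hs : s ∈ T) (ht : t ∈ T) :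
    Ioi (low (π '' T) (p * (π s)⁻¹)) ∩ Ioi (low (π '' T) (p * (π t)⁻¹)) =
      (fun w => high (π '' T) (p * π w)) '' ↑(s⁻¹ • T ∩ t⁻¹ • T) := by
  ext z
  rcases z with g | h
  · exact iff_of_false (fun hlt => not_lt_low _ _ hlt.1)
      (by rintro ⟨w, -, hw⟩; exact Sum.inr_ne_inl hw)
  change low _ _ < high _ h ∧ low _ _ < high _ h ↔ ∃ w, _ ∧ high _ _ = high _ h
  simp only [low_lt_high_image_iff, (high_injective _).eq_iff, Finset.coe_inter, mem_inter_iff,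
    Finset.mem_coe, Finset.mem_smul_finset, smul_eq_mul]
  have hquot : ∀ {a b : H}, p * (π a)⁻¹ = h * (π b)⁻¹ → (π a)⁻¹ * π b = p⁻¹ * h := by
    intro a b e
    rw [eq_comm, mul_inv_eq_iff_eq_mul] at e
    rw [e]; group
  constructor
  · rintro ⟨⟨u, hu, hsu⟩, ⟨v, hv, htv⟩⟩
    have hw : s⁻¹ * u = t⁻¹ * v := hπ (Finset.smul_finset_subset_inv_mul hs
      (Finset.smul_mem_smul_finset hu)) (Finset.smul_finset_subset_inv_mul ht
      (Finset.smul_mem_smul_finset hv)) (by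
        simp only [smul_eq_mul, map_mul, map_inv]
        rw [hquot hsu, hquot htv])
    refine ⟨s⁻¹ * u, ⟨⟨u, hu, rfl⟩, ⟨v, hv, hw.symm⟩⟩, ?_⟩
    rw [map_mul, map_inv, ← mul_assoc, hsu]
    group
  · rintro ⟨w, ⟨⟨u, hu, rfl⟩, ⟨v, hv, hvw⟩⟩, rfl⟩
    refine ⟨⟨u, hu, ?_⟩, ⟨v, hv, ?_⟩⟩
    · simp only [map_mul, map_inv]; group
    · rw [← hvw]; simp only [map_mul, map_inv]; group

theorem Ioi_low_inter_Ioi_low_nontrivial_iff (p : G) {s t : H} (hs : s ∈ T) (ht : t ∈ T) :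
    (Ioi (low (π '' T) (p * (π s)⁻¹)) ∩ Ioi (low (π '' T) (p * (π t)⁻¹))).Nontrivial ↔
      1 < (s⁻¹ • T ∩ t⁻¹ • T).card := by
  have hinj : InjOn (fun w => high (π '' T) (p * π w)) ↑(s⁻¹ • T ∩ t⁻¹ • T) :=
    fun w hw w' hw' h =>
      hπ (Finset.smul_finset_subset_inv_mul hs (Finset.mem_inter.mp hw).1)
        (Finset.smul_finset_subset_inv_mul hs (Finset.mem_inter.mp hw').1)
        (mul_left_cancel (high_injective _ h))
  rw [Ioi_low_inter_Ioi_low hπ p hs ht, Finset.one_lt_card_iff_nontrivial]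
  exact ⟨nontrivial_of_image _ _, fun h => Set.Nontrivial.image_of_injOn h hinj⟩

theorem linkDegree_low_high (p : G) {s : H} (hs : s ∈ T) :
    linkDegree (low (π '' T) (p * (π s)⁻¹)) (high (π '' T) p) = modelDegree T s := by
  set L := T.filter fun t => 1 < (s⁻¹ • T ∩ t⁻¹ • T).card
  have hset : {z | z < high (π '' T) p ∧ (Ioi (low (π '' T) (p * (π s)⁻¹)) ∩ Ioi z).Nontrivial} =
      (fun t => low (π '' T) (p * (π t)⁻¹)) '' ↑L := by
    ext z
    constructor
    · rintro ⟨hz, hnt⟩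
      rcases z with c | h
      · obtain ⟨t, ht, rfl⟩ := low_lt_high_image_iff.mp hz
        exact ⟨t, Finset.mem_filter.mpr
          ⟨ht, (Ioi_low_inter_Ioi_low_nontrivial_iff hπ p hs ht).mp hnt⟩, rfl⟩
      · exact absurd hz (not_high_lt _ _)
    · rintro ⟨t, ht, rfl⟩
      obtain ⟨ht, hcard⟩ := Finset.mem_filter.mp ht
      exact ⟨low_lt_high_image_iff.mpr ⟨t, ht, rfl⟩,
        (Ioi_low_inter_Ioi_low_nontrivial_iff hπ p hs ht).mpr hcard⟩
  have hinj : InjOn (fun t => low (π '' T) (p * (π t)⁻¹)) ↑L := fun t ht t' ht' h =>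
    injOn_of_injOn_inv_mul hπ (Finset.mem_filter.mp ht).1 (Finset.mem_filter.mp ht').1
      (inv_injective (mul_left_cancel (low_injective _ h)))
  rw [linkDegree, hset, hinj.ncard_image, ncard_coe_finset, modelDegree]

theorem exists_map_low_mul_inv (φ : CayleyPoset G (π '' T) ≃o CayleyPoset G (π '' T))
    {α β : G → G} (hα : ∀ g, φ (low _ g) = low _ (α g)) (hβ : ∀ h, φ (high _ h) = high _ (β h))
    (p : G) {s : H} (hs : s ∈ T) :
    ∃ s' ∈ T, modelDegree T s' = modelDegree T s ∧ α (p * (π s)⁻¹) = β p * (π s')⁻¹ := by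
  have hlt : low (π '' T) (α (p * (π s)⁻¹)) < high (π '' T) (β p) := by
    rw [← hα, ← hβ, φ.lt_iff_lt]
    exact low_lt_high_image_iff.mpr ⟨s, hs, rfl⟩
  obtain ⟨s', hs', heq⟩ := low_lt_high_image_iff.mp hlt
  refine ⟨s', hs', ?_, heq⟩
  rw [← linkDegree_low_high hπ _ hs', ← heq, ← hα, ← hβ, φ.linkDegree_apply,
    linkDegree_low_high hπ _ hs]

end LocalModel

section RightTranslation

variable [Group G]

theorem eq_of_apply_mul_eq_mul {α β : G → G} (u : G) (h1 : ∀ p, α (p * u) = β p * u)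
    (h2 : ∀ p, α (p * u ^ 2) = β p * u ^ 2) : α = β := by
  have hβ : ∀ p, β (p * u) = β p * u := by
    intro p
    have h := h1 (p * u)
    rw [mul_assoc, ← sq, h2, sq, ← mul_assoc] at h
    exact (mul_right_cancel h).symm
  funext q
  have hα := h1 (q * u⁻¹)
  have hβ' := hβ (q * u⁻¹)
  rw [inv_mul_cancel_right] at hα hβ'
  rw [hα, hβ']

theorem apply_mul_eq_mul_of_ne_one {f : G → G} (hf : Injective f) {u : G} (hu : u ≠ 1)
    (h : ∀ p, f (p * u) = f p ∨ f (p * u) = f p * u) (p : G) : f (p * u) = f p * u :=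
  (h p).resolve_left fun h' => hu (by simpa using hf h')

theorem apply_mul_eq_mul_of_swap {f : G → G} (hf : Injective f) {z : G}
    (hz : ∀ n, 0 < n → n ≤ 8 → z ^ n ≠ 1)
    (h1 : ∀ p, f (p * z) = f p * z ∨ f (p * z) = f p * z ^ 3)
    (h3 : ∀ p, f (p * z ^ 3) = f p * z ∨ f (p * z ^ 3) = f p * z ^ 3) (p : G) :
    f (p * z) = f p * z := by
  have hstep : ∀ g, ∃ i ∈ ({1, 3} : Finset ℕ), f (g * z) = f g * z ^ i := fun g =>
    (h1 g).elim (fun h => ⟨1, by simp, by rw [h, pow_one]⟩) (fun h => ⟨3, by simp, h⟩)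
  refine (h1 p).resolve_right fun hswap => ?_
  have hz3 : f (p * z ^ 3) = f p * z := (h3 p).resolve_right fun h =>
    hz 2 two_pos (by norm_num) (by
      have hpz := hf (h.trans hswap.symm)
      rw [pow_succ, mul_left_cancel_iff, mul_eq_right] at hpz
      exact hpz)
  obtain ⟨i, hi, hfi⟩ := hstep (p * z)
  obtain ⟨j, hj, hfj⟩ := hstep (p * z * z)
  -- follow `f` along `p, p z, p z², p z³` and compare with `hz3`
  have hrel : f p * z = f p * z ^ (3 + i + j) := by
    rw [← hz3, show p * z ^ 3 = p * z * z * z by simp only [pow_succ, pow_zero, one_mul, mul_assoc],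
      hfj, hfi, hswap, pow_add, pow_add]
    simp only [mul_assoc]
  simp only [Finset.mem_insert, Finset.mem_singleton] at hi hj
  rw [show 3 + i + j = (2 + i + j) + 1 by omega, pow_succ', ← mul_assoc, left_eq_mul] at hrel
  exact hz (2 + i + j) (by omega) (by omega) hrel

theorem apply_eq_mul_of_closure_eq_top {f : G → G} {s : Set G} (hs : Subgroup.closure s = ⊤)
    (hf : ∀ g ∈ s, ∀ p, f (p * g) = f p * g) (g : G) : f g = f 1 * g := by
  suffices ∀ p, f (p * g) = f p * g by simpa using this 1
  induction (hs ▸ Subgroup.mem_top g : g ∈ Subgroup.closure s) using Subgroup.closure_induction with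
  | mem g hg => exact hf g hg
  | one => simp
  | mul a b _ _ ha hb => intro p; rw [← mul_assoc, hb, ha, mul_assoc]
  | inv a _ ha => intro p; rw [eq_mul_inv_iff_mul_eq, ← ha, inv_mul_cancel_right]

end RightTranslation

section Girth

variable [Group G] {ι : Type*} [DecidableEq ι] {f : ι → G} {n : ℕ}

theorem FreeGroup.injOn_lift_of_girth
    (h : ∀ w : FreeGroup ι, w ≠ 1 → w.toWord.length ≤ 2 * n → FreeGroup.lift f w ≠ 1) :
    InjOn (FreeGroup.lift f) {w | w.norm ≤ n} := by
  intro u hu v hv huv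
  by_contra hne
  refine h (u * v⁻¹) (mul_inv_eq_one.not.mpr hne) ?_ (by simp [huv])
  calc (u * v⁻¹).toWord.length = (u * v⁻¹).norm := rfl
    _ ≤ u.norm + v⁻¹.norm := norm_mul_le _ _
    _ ≤ 2 * n := by rw [norm_inv_eq]; simp only [mem_ofPred_eq] at hu hv; omega

theorem FreeGroup.pow_ne_one_of_girth
    (h : ∀ w : FreeGroup ι, w ≠ 1 → w.toWord.length ≤ n → FreeGroup.lift f w ≠ 1) (i : ι) {k : ℕ}
    (hk : 0 < k) (hkn : k ≤ n) : f i ^ k ≠ 1 := by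
  have hlen : (of i ^ k).toWord.length = k := norm_of_pow i k
  simpa using h (of i ^ k) (fun h1 => by simp [h1] at hlen; omega) (by rw [hlen]; exact hkn)

end Girth

open FreeGroup in
/-- The words whose values at `(x, y)` form `S`. -/
def sWords : Finset (FreeGroup (Fin 2)) := {1, of 0, of 0 ^ 2, of 0 ^ 4, of 1, of 1 ^ 3}

section Computations

open FreeGroup

theorem norm_le_of_mem_inv_mul_sWords : ∀ w ∈ sWords⁻¹ * sWords, w.norm ≤ 8 := by decide

theorem eq_of_modelDegree_eq_sq :
    ∀ s ∈ sWords, modelDegree sWords s = modelDegree sWords (of 0 ^ 2) → s = of 0 ^ 2 := by decide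

theorem eq_of_modelDegree_eq_pow_four :
    ∀ s ∈ sWords, modelDegree sWords s = modelDegree sWords (of 0 ^ 4) → s = of 0 ^ 4 := by decide

theorem eq_or_eq_of_modelDegree_eq_of_zero :
    ∀ s ∈ sWords, modelDegree sWords s = modelDegree sWords (of 0) → s = 1 ∨ s = of 0 := by decide

theorem eq_or_eq_of_modelDegree_eq_of_one : ∀ s ∈ sWords, ∀ t ∈ ({of 1, of 1 ^ 3} : Finset _),
    modelDegree sWords s = modelDegree sWords t → s = of 1 ∨ s = of 1 ^ 3 := by decide

end Computations

section Cluster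

open FreeGroup

variable [Group G] {x y : G} {α β : G → G}
  (hclust : ∀ p, ∀ s ∈ sWords, ∃ s' ∈ sWords, modelDegree sWords s' = modelDegree sWords s ∧
    α (p * (lift ![x, y] s)⁻¹) = β p * (lift ![x, y] s')⁻¹)
include hclust

theorem apply_mul_x_sq_inv (p : G) : α (p * (x ^ 2)⁻¹) = β p * (x ^ 2)⁻¹ := by
  obtain ⟨s', hs', hdeg, h⟩ := hclust p (of 0 ^ 2) (by decide)
  rw [eq_of_modelDegree_eq_sq s' hs' hdeg] at h
  simpa using h

theorem apply_mul_x_pow_four_inv (p : G) : α (p * (x ^ 4)⁻¹) = β p * (x ^ 4)⁻¹ := by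
  obtain ⟨s', hs', hdeg, h⟩ := hclust p (of 0 ^ 4) (by decide)
  rw [eq_of_modelDegree_eq_pow_four s' hs' hdeg] at h
  simpa using h

theorem apply_mul_x_inv (p : G) : α (p * x⁻¹) = β p ∨ α (p * x⁻¹) = β p * x⁻¹ := by
  obtain ⟨s', hs', hdeg, h⟩ := hclust p (of 0) (by decide)
  rcases eq_or_eq_of_modelDegree_eq_of_zero s' hs' hdeg with rfl | rfl
  · exact Or.inl (by simpa using h)
  · exact Or.inr (by simpa using h)

theorem apply_mul_y_inv (p : G) :
    α (p * y⁻¹) = β p * y⁻¹ ∨ α (p * y⁻¹) = β p * y⁻¹ ^ 3 := by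
  obtain ⟨s', hs', hdeg, h⟩ := hclust p (of 1) (by decide)
  rcases eq_or_eq_of_modelDegree_eq_of_one s' hs' _ (by decide) hdeg with rfl | rfl
  · exact Or.inl (by simpa using h)
  · exact Or.inr (by simpa using h)

theorem apply_mul_y_inv_pow_three (p : G) :
    α (p * y⁻¹ ^ 3) = β p * y⁻¹ ∨ α (p * y⁻¹ ^ 3) = β p * y⁻¹ ^ 3 := by
  obtain ⟨s', hs', hdeg, h⟩ := hclust p (of 1 ^ 3) (by decide)
  rcases eq_or_eq_of_modelDegree_eq_of_one s' hs' _ (by decide) hdeg with rfl | rfl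
  · exact Or.inl (by simpa using h)
  · exact Or.inr (by simpa using h)

theorem eq_and_apply_eq_mul_of_closure (hgen : Subgroup.closure {x, y} = ⊤) (hx : x ≠ 1)
    (hy : ∀ n, 0 < n → n ≤ 8 → y ^ n ≠ 1) (hα : Injective α) : α = β ∧ ∀ g, α g = α 1 * g := by
  obtain rfl : α = β := eq_of_apply_mul_eq_mul (x ^ 2)⁻¹ (apply_mul_x_sq_inv hclust)
    (fun p => by rw [inv_pow, ← pow_mul]; exact apply_mul_x_pow_four_inv hclust p)
  refine ⟨rfl, apply_eq_mul_of_closure_eq_top (s := {x⁻¹, y⁻¹}) ?_ ?_⟩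
  · rw [← hgen, ← Subgroup.closure_inv, Set.inv_insert, Set.inv_singleton, inv_inv, inv_inv]
  rintro g (rfl | rfl)
  · exact apply_mul_eq_mul_of_ne_one hα (inv_ne_one.mpr hx) (apply_mul_x_inv hclust)
  · exact apply_mul_eq_mul_of_swap hα (fun n hn hn8 => by simpa [inv_pow] using hy n hn hn8)
      (apply_mul_y_inv hclust) (apply_mul_y_inv_pow_three hclust)

end Cluster

/-- If `G` is generated by `x, y` and no non-trivial reduced word of
length at most 21 in the free group of rank 2 evaluates to the identity at `(x, y)`
(i.e. the Cayley graph of `G` w.r.t. `{x,y}` has girth `> 21`), then with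
`S = {e, x, x², x⁴, y, y³}` the Cayley poset `P(G,S)` is a Cayley representation of `G`. -/
theorem cayley_rep_of_large_girth (G : Type*) [Group G] (x y : G)
    (hgen : Subgroup.closure {x, y} = ⊤)
    (hgirth : ∀ w : FreeGroup (Fin 2), w ≠ 1 → (FreeGroup.toWord w).length ≤ 21 →
      FreeGroup.lift ![x, y] w ≠ 1) :
    IsCayleyRep G ({1, x, x ^ 2, x ^ 4, y, y ^ 3} : Set G) := by
  have hS : ({1, x, x ^ 2, x ^ 4, y, y ^ 3} : Set G) = FreeGroup.lift ![x, y] '' sWords := by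
    simp [sWords, Set.image_insert_eq]
  have hπ : InjOn (FreeGroup.lift ![x, y]) ↑(sWords⁻¹ * sWords) :=
    (FreeGroup.injOn_lift_of_girth (n := 8) fun w hw hl => hgirth w hw (by omega)).mono
      norm_le_of_mem_inv_mul_sWords
  have hpow := FreeGroup.pow_ne_one_of_girth hgirth
  rw [hS]
  intro φ
  have hne : (FreeGroup.lift ![x, y] '' sWords).Nonempty := ⟨_, 1, by decide, rfl⟩
  choose α hα using CayleyPoset.exists_map_low φ hne
  choose β hβ using CayleyPoset.exists_map_high φ hne
  have hinj : Injective α := fun g g' h =>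
    CayleyPoset.low_injective _ (φ.injective (by rw [hα, hα, h]))
  obtain ⟨rfl, hmul⟩ := eq_and_apply_eq_mul_of_closure
    (fun p s hs => exists_map_low_mul_inv hπ φ hα hβ p hs) hgen
    (by simpa using hpow 0 one_pos (by norm_num))
    (fun n hn hn8 => by simpa using hpow 1 hn (by omega)) hinj
  refine ⟨α 1, ?_⟩
  rintro (g | h)
  · exact (hα g).trans (by rw [hmul g]; rfl)
  · exact (hβ h).trans (by rw [hmul h]; rfl)
end

section
/- If P is a semi-regular poset representation (with any number of orbits) of a group G that is neither trivial nor isomorphic to ℤ/2ℤ, then P is connected, i.e., any two points of P are related by the reflexive-transitive closure of the comparability relation (x and y are comparable when x ≤ y or y ≤ x). -/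
/-!
Every order automorphism of `P` with a fixed point is trivial, since `ρ` is onto and the action
is free. Suppose `P` is disconnected. An automorphism mapping some component to itself can be
changed to act on that component alone; the result fixes a point outside it, so it is trivial, and
hence so is the original automorphism. Thus for distinct `1, a, b ∈ G` the points `x`, `ρ a x`,
`ρ b x` lie in three different components. Exchanging the first two components by `ρ a` and
`ρ a⁻¹` gives an automorphism that fixes `ρ b x` but moves `x`, a contradiction.
-/

open Relation

abbrev Zigzag {P : Type*} [LE P] (a b : P) : Prop :=
  ReflTransGen (SymmGen (· ≤ ·)) a b

section Zigzag

variable {P Q : Type*} [Preorder P] [Preorder Q]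

theorem Monotone.zigzag {f : P → Q} (hf : Monotone f) {a b : P} (h : Zigzag a b) :
    Zigzag (f a) (f b) :=
  ReflTransGen.lift f (fun _ _ hzw => Or.imp (@hf _ _) (@hf _ _) hzw) a b h

theorem OrderIso.zigzag_apply_iff (f : P ≃o Q) {a b : P} : Zigzag (f a) (f b) ↔ Zigzag a b :=
  ⟨fun h => by simpa using f.symm.monotone.zigzag h, f.monotone.zigzag⟩

theorem isUpperSet_setOf_zigzag (p : P) : IsUpperSet {z | Zigzag p z} :=
  fun _ _ hzw hz => hz.tail (.of_le hzw)

theorem isLowerSet_setOf_zigzag (p : P) : IsLowerSet {z | Zigzag p z} :=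
  fun _ _ hzw hz => hz.tail (.of_ge hzw)

end Zigzag

section Piecewise

variable {P Q : Type*} [Preorder P] [Preorder Q] {S : Set P} [DecidablePred (· ∈ S)]

theorem Monotone.piecewise_of_isUpperSet_of_isLowerSet (hSu : IsUpperSet S) (hSl : IsLowerSet S)
    {f g : P → Q} (hf : Monotone f) (hg : Monotone g) : Monotone (S.piecewise f g) := by
  intro z w hzw
  by_cases hz : z ∈ S
  · simp only [Set.piecewise_eq_of_mem _ _ _ hz, Set.piecewise_eq_of_mem _ _ _ (hSu hzw hz),
      hf hzw]
  · have hw : w ∉ S := fun hw => hz (hSl hzw hw)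
    simp only [Set.piecewise_eq_of_notMem _ _ _ hz, Set.piecewise_eq_of_notMem _ _ _ hw, hg hzw]

def OrderIso.piecewiseId (hSu : IsUpperSet S) (hSl : IsLowerSet S) (f : P ≃o P)
    (hf : ∀ z, f z ∈ S ↔ z ∈ S) : P ≃o P :=
  Equiv.toOrderIso
    { toFun := S.piecewise f id
      invFun := S.piecewise f.symm id
      left_inv := fun z => by by_cases hz : z ∈ S <;> simp [Set.piecewise, hz, hf]
      right_inv := fun z => by
        by_cases hz : z ∈ S
        · have : f.symm z ∈ S := by rwa [← hf, f.apply_symm_apply]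
          simp [Set.piecewise, hz, this]
        · simp [Set.piecewise, hz] }
    (Monotone.piecewise_of_isUpperSet_of_isLowerSet hSu hSl f.monotone monotone_id)
    (Monotone.piecewise_of_isUpperSet_of_isLowerSet hSu hSl f.symm.monotone monotone_id)

theorem OrderIso.coe_piecewiseId (hSu : IsUpperSet S) (hSl : IsLowerSet S) (f : P ≃o P)
    (hf : ∀ z, f z ∈ S ↔ z ∈ S) :
    ⇑(piecewiseId hSu hSl f hf) = fun z => if z ∈ S then f z else z :=
  rfl

def OrderIso.swapImage (hSu : IsUpperSet S) (hSl : IsLowerSet S) (f : P ≃o P)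
    (hdisj : ∀ z ∈ S, f z ∉ S) : P ≃o P :=
  letI : DecidablePred (· ∈ f.symm ⁻¹' S) := fun z =>
    inferInstanceAs (Decidable (f.symm z ∈ S))
  have hinv : Function.Involutive (S.piecewise f ((f.symm ⁻¹' S).piecewise f.symm id)) :=
    fun z => by
      by_cases hz : z ∈ S <;> by_cases hz' : f.symm z ∈ S <;>
        simp [Set.piecewise, hz, hz', hdisj]
  have hmono := Monotone.piecewise_of_isUpperSet_of_isLowerSet hSu hSl f.monotone
    (Monotone.piecewise_of_isUpperSet_of_isLowerSet (hSu.preimage f.symm.monotone)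
      (hSl.preimage f.symm.monotone) f.symm.monotone monotone_id)
  Equiv.toOrderIso (hinv.toPerm _) hmono hmono

theorem OrderIso.coe_swapImage (hSu : IsUpperSet S) (hSl : IsLowerSet S) (f : P ≃o P)
    (hdisj : ∀ z ∈ S, f z ∉ S) :
    ⇑(swapImage hSu hSl f hdisj) =
      fun z => if z ∈ S then f z else if f.symm z ∈ S then f.symm z else z :=
  rfl

end Piecewise

section Rigid

variable {P : Type*} [PartialOrder P]

theorem OrderIso.eq_one_of_zigzag_apply_self
    (hrigid : ∀ (σ : P ≃o P) (q : P), σ q = q → σ = 1)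
    {x y : P} (hxy : ¬ Zigzag x y) {f : P ≃o P} {p : P} (hp : Zigzag p (f p)) : f = 1 := by
  classical
  obtain ⟨q, hq⟩ : ∃ q, ¬ Zigzag p q := by
    by_cases hpx : Zigzag p x
    · exact ⟨y, fun hpy => hxy ((_root_.symm hpx).trans hpy)⟩
    · exact ⟨x, hpx⟩
  have hf : ∀ z, Zigzag p (f z) ↔ Zigzag p z := fun z =>
    ⟨fun h => f.zigzag_apply_iff.mp ((_root_.symm hp).trans h),
      fun h => hp.trans (f.zigzag_apply_iff.mpr h)⟩
  set τ := piecewiseId (isUpperSet_setOf_zigzag p) (isLowerSet_setOf_zigzag p) f hf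
  have hτ : τ = 1 := hrigid τ q (by simp [τ, coe_piecewiseId, hq])
  have hfp : f p = p := by
    simpa [τ, coe_piecewiseId, ReflTransGen.refl] using DFunLike.congr_fun hτ p
  exact hrigid f p hfp

theorem OrderIso.zigzag_apply_self_of_not_zigzag
    (hrigid : ∀ (σ : P ≃o P) (q : P), σ q = q → σ = 1) (f : P ≃o P) {p q : P}
    (hq : ¬ Zigzag p q) (hfq : ¬ Zigzag (f p) q) : Zigzag p (f p) := by
  classical
  by_contra hfp
  have hdisj : ∀ z, Zigzag p z → ¬ Zigzag p (f z) := fun z hz hfz =>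
    hfp (hfz.trans (_root_.symm (f.zigzag_apply_iff.mpr hz)))
  set σ := swapImage (isUpperSet_setOf_zigzag p) (isLowerSet_setOf_zigzag p) f hdisj
  have hfq' : ¬ Zigzag p (f.symm q) := by rwa [← f.zigzag_apply_iff, f.apply_symm_apply]
  have hσ : σ = 1 := hrigid σ q (by simp [σ, coe_swapImage, hq, hfq'])
  have hσp : σ p = f p := by simp [σ, coe_swapImage, ReflTransGen.refl]
  exact hfp (by rw [← hσp, hσ]; exact .refl)

end Rigid

theorem exists_ne_one_ne_one_ne_of_isEmpty_mulEquiv_zmod_two {G : Type*} [Group G]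
    [Nontrivial G] (h2 : IsEmpty (G ≃* Multiplicative (ZMod 2))) :
    ∃ a b : G, a ≠ 1 ∧ b ≠ 1 ∧ a ≠ b := by
  by_contra! h
  obtain ⟨a, ha⟩ := exists_ne (1 : G)
  have hcard : Nat.card G = 2 := (Nat.card_eq_two_iff' 1).mpr ⟨a, ha, fun b hb => h b a hb ha⟩
  exact h2.false (mulEquivOfPrimeCardEq hcard (by simp))

theorem eq_one_of_apply_eq_of_free {G P : Type*} [Group G] [PartialOrder P] (ρ : G ≃* (P ≃o P))
    (hfree : ∀ (g : G) (p : P), ρ g p = p → g = 1) (σ : P ≃o P) (q : P) (hq : σ q = q) :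
    σ = 1 := by
  obtain ⟨g, rfl⟩ := ρ.surjective σ
  rw [hfree g q hq, map_one]

/-- If `P` is a semi-regular poset representation (free action, any
number of orbits) of a group `G` that is neither trivial nor `ℤ/2ℤ`, then `P` is
connected: any two points are joined by the reflexive-transitive closure of
comparability. -/
theorem connected_of_semiRegular_rep (G : Type*) [Group G]
    (hnt : Nontrivial G) (h2 : IsEmpty (G ≃* Multiplicative (ZMod 2)))
    (P : Type*) [PartialOrder P] (ρ : G ≃* (P ≃o P))
    (hfree : ∀ (g : G) (p : P), ρ g p = p → g = 1)
    (x y : P) :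
    Relation.ReflTransGen (fun a b : P => a ≤ b ∨ b ≤ a) x y := by
  by_contra hxy
  have hrigid := eq_one_of_apply_eq_of_free ρ hfree
  have hmove : ∀ g : G, g ≠ 1 → ¬ Zigzag x (ρ g x) := fun g hg hx =>
    hg (ρ.map_eq_one_iff.mp (OrderIso.eq_one_of_zigzag_apply_self hrigid hxy hx))
  obtain ⟨a, b, ha, hb, hab⟩ := exists_ne_one_ne_one_ne_of_isEmpty_mulEquiv_zmod_two h2
  have hab' : ¬ Zigzag (ρ a x) (ρ b x) := fun h =>
    hmove (a⁻¹ * b) (by rwa [Ne, inv_mul_eq_one])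
      (by simpa using (ρ a⁻¹).zigzag_apply_iff.mpr h)
  exact hmove a ha (OrderIso.zigzag_apply_self_of_not_zigzag hrigid (ρ a) (hmove b hb) hab')
end

section
/- Let G be a group and S ⊆ G a nonempty subset such that the Cayley poset P(G,S) is a Cayley representation of G. Then the Cayley digraph of G with connection set S is a digraphical regular representation of G: every bijection φ : G → G satisfying, for all g, h ∈ G, g⁻¹h ∈ S if and only if φ(g)⁻¹φ(h) ∈ S, is left multiplication by some element of G. -/
variable {G : Type*}

namespace CayleyPoset

variable [Group G] {S : Set G}

def orderIsoOfArcIff (φ : G ≃ G) (hφ : ∀ g h : G, g⁻¹ * h ∈ S ↔ (φ g)⁻¹ * φ h ∈ S) :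
    CayleyPoset G S ≃o CayleyPoset G S where
  toEquiv := Equiv.sumCongr φ φ
  map_rel_iff' := by
    intro x y
    change cayleyLE S (Sum.map φ φ x) (Sum.map φ φ y) ↔ cayleyLE S x y
    rcases x with g | g <;> rcases y with h | h <;>
      simp only [Sum.map_inl, Sum.map_inr, cayleyLE, φ.injective.eq_iff, ← hφ]

theorem orderIsoOfArcIff_inl (φ : G ≃ G) (hφ : ∀ g h : G, g⁻¹ * h ∈ S ↔ (φ g)⁻¹ * φ h ∈ S)
    (g : G) : orderIsoOfArcIff φ hφ (Sum.inl g) = Sum.inl (φ g) :=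
  rfl

end CayleyPoset

theorem cayley_digraph_DRR_of_cayleyRep_general (G : Type*) [Group G] (S : Set G)
    (hrep : IsCayleyRep G S)
    (φ : G ≃ G) (hφ : ∀ g h : G, g⁻¹ * h ∈ S ↔ (φ g)⁻¹ * φ h ∈ S) :
    ∃ a : G, ∀ g : G, φ g = a * g := by
  obtain ⟨a, ha⟩ := hrep (CayleyPoset.orderIsoOfArcIff φ hφ)
  refine ⟨a, fun g => Sum.inl.inj (β := G) ?_⟩
  rw [← CayleyPoset.orderIsoOfArcIff_inl φ hφ]
  exact ha (Sum.inl g)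

/-- If `P(G,S)` is a Cayley representation of `G`, then the Cayley
digraph of `G` with connection set `S` is a digraphical regular representation: every
bijection `φ : G → G` with `g⁻¹*h ∈ S ↔ (φ g)⁻¹ * φ h ∈ S` for all `g, h` is left
multiplication by some element of `G`. -/
theorem cayley_digraph_DRR_of_cayleyRep (G : Type*) [Group G] (S : Set G)
    (hne : S.Nonempty) (hrep : IsCayleyRep G S)
    (φ : G ≃ G) (hφ : ∀ g h : G, g⁻¹ * h ∈ S ↔ (φ g)⁻¹ * φ h ∈ S) :
    ∃ a : G, ∀ g : G, φ g = a * g :=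
  cayley_digraph_DRR_of_cayleyRep_general G S hrep φ hφ
end

section
/- The group ℤ/2ℤ × ℤ/2ℤ does not admit a semi-regular poset representation with three orbits: there is no partial order P and group isomorphism from ℤ/2ℤ × ℤ/2ℤ onto the group of order automorphisms of P such that the induced action on P is free and has exactly three orbits. -/
universe u v

/-- A group `G` admits a semi-regular poset representation with exactly `k` orbits:
there is a partial order `P` and a group isomorphism `ρ` from `G` onto the group of
order automorphisms of `P` such that the induced action is free, and there are `k`
orbit representatives such that every point lies in the orbit of exactly one of them. -/
def HasSemiRegularPosetRep (G : Type u) [Group G] (k : ℕ) : Prop :=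
  ∃ (P : Type v) (_ : PartialOrder P) (ρ : G ≃* (P ≃o P)),
    (∀ (g : G) (p : P), ρ g p = p → g = 1) ∧
    ∃ reps : Fin k → P, ∀ p : P, ∃! i : Fin k, ∃ g : G, ρ g (reps i) = p

/-!
Write `V₄ = ℤ/2 × ℤ/2` and identify `P` with `Fin 3 × V₄` through the representatives `rᵢ`,
the point `(i, g)` being `g • rᵢ`. For two orbits `i, j` let `C i j ⊆ V₄` be the set of `g`
with `rᵢ` comparable to `g • rⱼ`. As every group element has finite order, no two points of one
orbit are comparable and all comparabilities between two orbits point the same way; hence a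
permutation `(i, a) ↦ (i, sᵢ a)` preserving the sets `C i j` is an order automorphism, so it
must be a translation by a single element of `V₄`.

A subset of `V₄` either has odd size, i.e. is constant off one point `x` (so comparability of
`(i, a)` and `(j, b)` depends only on whether `a * b = x`), or is invariant under a nontrivial
translation `u`. Two pairs of orbits sharing an orbit cannot be of the same kind: if both are
odd, transpositions matched along the two matchings give an automorphism that is not a
translation; if both are invariant, either translations by different elements on different
orbits give one, or transitivity through the middle orbit forces a third set to be all of `V₄`.
Among the three pairs of orbits two are of the same kind.
-/

open Equiv Relation

namespace OrderIso

variable {P : Type*} [PartialOrder P]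

theorem le_pow_apply_of_le_apply {f : P ≃o P} {x : P} (h : x ≤ f x) :
    ∀ n : ℕ, x ≤ (f ^ n) x
  | 0 => le_rfl
  | n + 1 => by
    rw [pow_succ', RelIso.mul_apply]
    exact h.trans (f.monotone (le_pow_apply_of_le_apply h n))

theorem not_lt_apply_self_of_isOfFinOrder {f : P ≃o P} (hf : IsOfFinOrder f) (x : P) :
    ¬ x < f x := by
  intro h
  obtain ⟨n, hn, hfn⟩ := hf.exists_pow_eq_one
  obtain ⟨m, rfl⟩ : ∃ m, n = m + 1 := Nat.exists_eq_add_one.mpr hn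
  have := h.trans_le (le_pow_apply_of_le_apply (f.monotone h.le) m)
  rw [← RelIso.mul_apply, ← pow_succ, hfn] at this
  exact lt_irrefl x this

theorem not_apply_lt_self_of_isOfFinOrder {f : P ≃o P} (hf : IsOfFinOrder f) (x : P) :
    ¬ f x < x := by
  simpa using not_lt_apply_self_of_isOfFinOrder hf.inv (f x)

end OrderIso

section Action

variable {G P : Type*} [Group G] [PartialOrder P] {ρ : G →* (P ≃o P)}

theorem not_symmGen_lt_apply_self [Finite G] (g : G) (x : P) :
    ¬ SymmGen (· < ·) x (ρ g x) := by
  have hg := ρ.isOfFinOrder (isOfFinOrder_of_finite g)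
  rintro (h | h)
  exacts [OrderIso.not_lt_apply_self_of_isOfFinOrder hg x h,
    OrderIso.not_apply_lt_self_of_isOfFinOrder hg x h]

theorem strictMono_of_lt_imp_symmGen [Finite G] {σ : P → P} (horb : ∀ x, ∃ g, σ x = ρ g x)
    (hσ : ∀ x y, x < y → SymmGen (· < ·) (σ x) (σ y)) : StrictMono σ := by
  intro x y hxy
  refine (hσ x y hxy).resolve_right fun hyx => ?_
  obtain ⟨g, hg⟩ := horb x
  obtain ⟨k, hk⟩ := horb y
  have hlt : ρ g (ρ (g⁻¹ * k) y) < ρ g x := by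
    rwa [← RelIso.mul_apply, ← map_mul, mul_inv_cancel_left, ← hk, ← hg]
  exact not_symmGen_lt_apply_self (g⁻¹ * k) x
    (.inr (((ρ (g⁻¹ * k)).lt_iff_lt.mpr hxy).trans ((ρ g).lt_iff_lt.mp hlt)))

theorem exists_forall_apply_eq_of_symmGen_iff [Finite G] (hρ : Function.Surjective ρ)
    (σ : P ≃ P) (horb : ∀ x, ∃ g, σ x = ρ g x)
    (hσ : ∀ x y, SymmGen (· < ·) (σ x) (σ y) ↔ SymmGen (· < ·) x y) :
    ∃ g, ∀ x, σ x = ρ g x := by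
  have horb' : ∀ x, ∃ g, σ.symm x = ρ g x := fun x => by
    obtain ⟨g, hg⟩ := horb (σ.symm x)
    refine ⟨g⁻¹, ?_⟩
    rw [map_inv, ← (ρ g).symm_apply_apply (σ.symm x), ← hg, σ.apply_symm_apply]
    rfl
  have mono := strictMono_of_lt_imp_symmGen horb fun x y h => (hσ x y).mpr (.inl h)
  have mono' := strictMono_of_lt_imp_symmGen horb' fun x y h => by
    rw [← hσ, σ.apply_symm_apply, σ.apply_symm_apply]
    exact .inl h
  obtain ⟨g, hg⟩ := hρ (σ.toOrderIso mono.monotone mono'.monotone)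
  exact ⟨g, fun x => by rw [hg]; rfl⟩

variable {ι : Type*}

def IsEquivariant (ρ : G →* (P ≃o P)) (E : ι × G ≃ P) : Prop :=
  ∀ i a b, E (i, a * b) = ρ a (E (i, b))

theorem exists_isEquivariant_of_free (hfree : ∀ g p, ρ g p = p → g = 1) (reps : ι → P)
    (huniq : ∀ p, ∃! i, ∃ g, ρ g (reps i) = p) : ∃ E : ι × G ≃ P, IsEquivariant ρ E := by
  have hbij : Function.Bijective fun z : ι × G => ρ z.2 (reps z.1) := by
    constructor
    · rintro ⟨i, a⟩ ⟨j, b⟩ (h : ρ a (reps i) = ρ b (reps j))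
      obtain rfl : i = j := (huniq _).unique ⟨a, h⟩ ⟨b, rfl⟩
      have : ρ (b⁻¹ * a) (reps i) = reps i := by
        rw [map_mul, RelIso.mul_apply, h, ← RelIso.mul_apply, ← map_mul, inv_mul_cancel,
          map_one]
        rfl
      rw [inv_mul_eq_one.mp (hfree _ _ this)]
    · intro p
      obtain ⟨i, ⟨g, hg⟩, -⟩ := huniq p
      exact ⟨(i, g), hg⟩
  exact ⟨.ofBijective _ hbij, fun i a b => by simp [RelIso.mul_apply]⟩

def OrbitComparable (E : ι × G ≃ P) (i j : ι) (g : G) : Prop :=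
  SymmGen (· < ·) (E (i, 1)) (E (j, g))

variable {E : ι × G ≃ P}

theorem symmGen_lt_iff_orbitComparable (hE : IsEquivariant ρ E) (i j : ι) (a b : G) :
    SymmGen (· < ·) (E (i, a)) (E (j, b)) ↔ OrbitComparable E i j (a⁻¹ * b) := by
  have hi : E (i, a) = ρ a (E (i, 1)) := by rw [← hE, mul_one]
  have hj : E (j, b) = ρ a (E (j, a⁻¹ * b)) := by rw [← hE, mul_inv_cancel_left]
  rw [hi, hj]
  simp only [OrbitComparable, SymmGen, OrderIso.lt_iff_lt]

theorem not_orbitComparable_self [Finite G] (hE : IsEquivariant ρ E) (i : ι) (g : G) :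
    ¬ OrbitComparable E i i g := by
  rw [OrbitComparable, ← mul_one g, hE]
  exact not_symmGen_lt_apply_self g _

theorem exists_eq_mul_of_orbitComparable_iff [Finite G] (hρ : Function.Surjective ρ)
    (hE : IsEquivariant ρ E) (s : ι → Perm G)
    (hs : ∀ i j, i ≠ j → ∀ a b,
      OrbitComparable E i j ((s i a)⁻¹ * s j b) ↔ OrbitComparable E i j (a⁻¹ * b)) :
    ∃ g, ∀ i a, s i a = g * a := by
  let σ : P ≃ P := E.symm.trans ((Equiv.prodShear (Equiv.refl ι) s).trans E)
  have hσ : ∀ i a, σ (E (i, a)) = E (i, s i a) := fun i a => by simp [σ]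
  have horb : ∀ x, ∃ g, σ x = ρ g x := by
    intro x
    obtain ⟨⟨i, a⟩, rfl⟩ := E.surjective x
    exact ⟨s i a * a⁻¹, by rw [hσ, ← hE, inv_mul_cancel_right]⟩
  have hcomp : ∀ x y, SymmGen (· < ·) (σ x) (σ y) ↔ SymmGen (· < ·) x y := by
    intro x y
    obtain ⟨⟨i, a⟩, rfl⟩ := E.surjective x
    obtain ⟨⟨j, b⟩, rfl⟩ := E.surjective y
    rw [hσ, hσ, symmGen_lt_iff_orbitComparable hE, symmGen_lt_iff_orbitComparable hE]
    rcases eq_or_ne i j with rfl | hij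
    · exact iff_of_false (not_orbitComparable_self hE _ _) (not_orbitComparable_self hE _ _)
    · exact hs i j hij a b
  obtain ⟨g, hg⟩ := exists_forall_apply_eq_of_symmGen_iff hρ σ horb hcomp
  refine ⟨g, fun i a => ?_⟩
  have := (hσ i a).symm.trans ((hg _).trans (hE i g a).symm)
  exact congrArg Prod.snd (E.injective this)

end Action

theorem forall_ne_of_symm_fin_three {R : Fin 3 → Fin 3 → Prop} (hR : ∀ i j, R i j → R j i)
    (h01 : R 0 1) (h02 : R 0 2) (h12 : R 1 2) : ∀ i j, i ≠ j → R i j := by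
  intro i j hij
  fin_cases i <;> fin_cases j <;> first
    | exact absurd rfl hij | assumption | exact hR _ _ ‹_›

section Products

variable {M : Type*}

def IsMulPeriod [Mul M] (A : M → Prop) (u : M) : Prop := ∀ g, A (g * u) ↔ A g

def IsConstOffPoint (A : M → Prop) (x : M) : Prop := ∀ g h, g ≠ x → h ≠ x → (A g ↔ A h)

def PreservesOnProducts [Mul M] (A : M → Prop) (π π' : Perm M) : Prop :=
  ∀ a b, A (π a * π' b) ↔ A (a * b)

theorem isMulPeriod_one [MulOneClass M] (A : M → Prop) : IsMulPeriod A 1 :=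
  fun g => by rw [mul_one g]

theorem isMulPeriod_of_forall [Mul M] {A : M → Prop} (hA : ∀ g, A g) (u : M) :
    IsMulPeriod A u :=
  fun _ => iff_of_true (hA _) (hA _)

theorem exists_of_not_isMulPeriod [Mul M] {A : M → Prop} {u : M} (h : ¬ IsMulPeriod A u) :
    ∃ g, A g := by
  by_contra! hA
  exact h fun g => iff_of_false (hA _) (hA _)

theorem IsMulPeriod.mul_mem [MulOneClass M] {A : M → Prop} {u e g : M} (hA : IsMulPeriod A u)
    (he : e = 1 ∨ e = u) (hg : A g) : A (g * e) := by
  rcases he with rfl | rfl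
  exacts [(mul_one g).symm ▸ hg, (hA g).mpr hg]

theorem IsConstOffPoint.preservesOnProducts [Mul M] {A : M → Prop} {x : M} {π π' : Perm M}
    (hA : IsConstOffPoint A x) (h : ∀ a b, π a * π' b = x ↔ a * b = x) :
    PreservesOnProducts A π π' := by
  intro a b
  by_cases hab : a * b = x
  · rw [hab, (h a b).mpr hab]
  · exact hA _ _ (mt (h a b).mp hab) hab

theorem IsMulPeriod.preservesOnProducts [Mul M] {A : M → Prop} {u : M} {π π' : Perm M}
    (hA : IsMulPeriod A u) (h : ∀ a b, π a * π' b = a * b ∨ π a * π' b = a * b * u) :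
    PreservesOnProducts A π π' := by
  intro a b
  rcases h a b with h | h <;> rw [h]
  exact hA _

theorem IsMulPeriod.preservesOnProducts_mulLeft [CommGroup M] {A : M → Prop} {x y : M}
    (hA : IsMulPeriod A (x * y)) :
    PreservesOnProducts A (Equiv.mulLeft x) (Equiv.mulLeft y) := by
  intro a b
  rw [coe_mulLeft, coe_mulLeft, mul_mul_mul_comm, mul_comm]
  exact hA _

theorem PreservesOnProducts.symm [CommMagma M] {A : M → Prop} {π π' : Perm M}
    (h : PreservesOnProducts A π π') : PreservesOnProducts A π' π :=
  fun a b => by rw [mul_comm, h, mul_comm]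

end Products

section KleinFour

local notation "V₄" => Multiplicative (ZMod 2 × ZMod 2)

theorem klein_mul_self : ∀ g : V₄, g * g = 1 := by decide

theorem klein_inv (g : V₄) : g⁻¹ = g := inv_eq_of_mul_eq_one_right (klein_mul_self g)

set_option synthInstance.maxSize 5000 in
theorem klein_bool_classification : ∀ f : V₄ → Bool,
    (∃ x, ∀ g h, g ≠ x → h ≠ x → f g = f h) ∨ ∃ u ≠ 1, ∀ g, f (g * u) = f g := by
  decide

theorem klein_swap_mul_swap_eq_iff :
    ∀ w x a b : V₄, swap 1 w a * swap x (x * w) b = x ↔ a * b = x := by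
  decide

theorem klein_exists_swap_mul_swap_eq_iff : ∀ x y z : V₄,
    ∃ w ≠ 1, ∀ a b, swap x (x * w) a * swap y (y * w) b = z ↔ a * b = z := by
  decide

theorem klein_swap_mul_swap_eq_or : ∀ x y u a b : V₄,
    swap x (x * u) a * swap y (y * u) b = a * b ∨
      swap x (x * u) a * swap y (y * u) b = a * b * u := by
  decide

theorem klein_exists_swap_ne_mul : ∀ w g : V₄, w ≠ 1 → ∃ c, swap 1 w c ≠ g * c := by
  decide

set_option synthInstance.maxSize 5000 in
theorem klein_exists_eq_mul_mul : ∀ u v c g : V₄, u ≠ 1 → v ≠ 1 → u ≠ v →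
    ∃ e f, (e = 1 ∨ e = u) ∧ (f = 1 ∨ f = v) ∧ g = c * e * f := by
  decide

theorem klein_isConstOffPoint_or_isMulPeriod (A : V₄ → Prop) :
    (∃ x, IsConstOffPoint A x) ∨ ∃ u ≠ 1, IsMulPeriod A u := by
  classical
  simpa [IsConstOffPoint, IsMulPeriod] using klein_bool_classification fun g => decide (A g)

theorem klein_forall_of_isMulPeriod {A : V₄ → Prop} {u v c : V₄} (hA : IsMulPeriod A v)
    (hu : u ≠ 1) (hv : v ≠ 1) (huv : u ≠ v) (hc : A c) (hcu : A (c * u)) (g : V₄) : A g := by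
  obtain ⟨e, f, he, hf, rfl⟩ := klein_exists_eq_mul_mul u v c g hu hv huv
  rcases he with rfl | rfl
  exacts [hA.mul_mem hf ((mul_one c).symm ▸ hc), hA.mul_mem hf hcu]

variable {P : Type*} [PartialOrder P] {ρ : V₄ →* (P ≃o P)} {E : Fin 3 × V₄ ≃ P}

local notation "C" => OrbitComparable E

theorem orbitComparable_comm (hE : IsEquivariant ρ E) (i j : Fin 3) : C j i = C i j := by
  ext g
  rw [OrbitComparable, symmGen_comm, ← mul_one g, symmGen_lt_iff_orbitComparable hE, mul_one,
    klein_inv, mul_one]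

theorem exists_eq_mul_of_preservesOnProducts (hρ : Function.Surjective ρ)
    (hE : IsEquivariant ρ E) (s : Fin 3 → Perm V₄)
    (h01 : PreservesOnProducts (C 0 1) (s 0) (s 1))
    (h02 : PreservesOnProducts (C 0 2) (s 0) (s 2))
    (h12 : PreservesOnProducts (C 1 2) (s 1) (s 2)) : ∃ g, ∀ i a, s i a = g * a := by
  have hs : ∀ i j, i ≠ j → PreservesOnProducts (C i j) (s i) (s j) :=
    forall_ne_of_symm_fin_three (fun i j h => orbitComparable_comm hE i j ▸ h.symm) h01 h02 h12
  refine exists_eq_mul_of_orbitComparable_iff hρ hE s fun i j hij a b => ?_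
  simpa only [klein_inv] using hs i j hij a b

theorem eq_one_of_isMulPeriod (hρ : Function.Surjective ρ) (hE : IsEquivariant ρ E) {x y : V₄}
    (h01 : IsMulPeriod (C 0 1) x) (h02 : IsMulPeriod (C 0 2) y)
    (h12 : IsMulPeriod (C 1 2) (x * y)) : x = 1 := by
  obtain ⟨g, hg⟩ := exists_eq_mul_of_preservesOnProducts hρ hE
    ![Equiv.mulLeft 1, Equiv.mulLeft x, Equiv.mulLeft y]
    (IsMulPeriod.preservesOnProducts_mulLeft (by rwa [one_mul]))
    (IsMulPeriod.preservesOnProducts_mulLeft (by rwa [one_mul]))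
    (IsMulPeriod.preservesOnProducts_mulLeft h12)
  have h0 : 1 = g := by simpa using hg 0 1
  simpa [← h0] using hg 1 1

theorem false_of_isConstOffPoint (hρ : Function.Surjective ρ) (hE : IsEquivariant ρ E)
    {x y : V₄} (h01 : IsConstOffPoint (C 0 1) x) (h02 : IsConstOffPoint (C 0 2) y) : False := by
  obtain ⟨w, hw, h12⟩ :
      ∃ w ≠ 1, PreservesOnProducts (C 1 2) (swap x (x * w)) (swap y (y * w)) := by
    rcases klein_isConstOffPoint_or_isMulPeriod (C 1 2) with ⟨z, h12⟩ | ⟨u, hu, h12⟩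
    · obtain ⟨w, hw, hz⟩ := klein_exists_swap_mul_swap_eq_iff x y z
      exact ⟨w, hw, h12.preservesOnProducts hz⟩
    · exact ⟨u, hu, h12.preservesOnProducts (klein_swap_mul_swap_eq_or x y u)⟩
  obtain ⟨g, hg⟩ := exists_eq_mul_of_preservesOnProducts hρ hE
    ![swap 1 w, swap x (x * w), swap y (y * w)]
    (h01.preservesOnProducts (klein_swap_mul_swap_eq_iff w x))
    (h02.preservesOnProducts (klein_swap_mul_swap_eq_iff w y)) h12
  obtain ⟨c, hc⟩ := klein_exists_swap_ne_mul w g hw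
  exact hc (hg 0 c)

variable (E) in
def OrbitsDirected (i j : Fin 3) : Prop := ∀ g, C i j g → E (i, 1) < E (j, g)

variable (E) in
def OrbitBetween (m a b : Fin 3) : Prop := ∀ x y, C m a x → C m b y → C a b (x * y)

theorem orbitsDirected_or (hE : IsEquivariant ρ E) (i j : Fin 3) :
    OrbitsDirected E i j ∨ OrbitsDirected E j i := by
  by_cases h : ∃ c, E (i, 1) < E (j, c)
  · obtain ⟨c, hc⟩ := h
    refine .inl fun g hg => hg.resolve_right fun hgi => ?_
    exact not_orbitComparable_self hE j _
      ((symmGen_lt_iff_orbitComparable hE j j g c).mp (.inl (hgi.trans hc)))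
  · refine .inr fun g hg => hg.resolve_right fun hgj => h ⟨g, ?_⟩
    have := (ρ g).lt_iff_lt.mpr hgj
    rwa [← hE, ← hE, klein_mul_self, mul_one] at this

theorem orbitBetween_of_orbitsDirected (hE : IsEquivariant ρ E) {a m b : Fin 3}
    (ham : OrbitsDirected E a m) (hmb : OrbitsDirected E m b) : OrbitBetween E m a b := by
  intro x y hx hy
  have hxm : E (m, x) = ρ x (E (m, 1)) := by rw [← hE, mul_one]
  have hlt : E (m, x) < E (b, x * y) := by
    rw [hxm, hE]
    exact (ρ x).lt_iff_lt.mpr (hmb y hy)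
  exact .inl ((ham x (orbitComparable_comm hE a m ▸ hx)).trans hlt)

theorem OrbitBetween.symm (hE : IsEquivariant ρ E) {m a b : Fin 3} (h : OrbitBetween E m a b) :
    OrbitBetween E m b a := fun x y hx hy => by
  rw [orbitComparable_comm hE a b, mul_comm]
  exact h y x hy hx

theorem orbitBetween_cases (hE : IsEquivariant ρ E) :
    OrbitBetween E 0 1 2 ∨ OrbitBetween E 1 0 2 ∨ OrbitBetween E 2 0 1 := by
  rcases orbitsDirected_or hE 0 1 with h01 | h10 <;>
    rcases orbitsDirected_or hE 0 2 with h02 | h20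
  · rcases orbitsDirected_or hE 1 2 with h12 | h21
    · exact .inr (.inl (orbitBetween_of_orbitsDirected hE h01 h12))
    · exact .inr (.inr (orbitBetween_of_orbitsDirected hE h02 h21))
  · exact .inl ((orbitBetween_of_orbitsDirected hE h20 h01).symm hE)
  · exact .inl (orbitBetween_of_orbitsDirected hE h10 h02)
  · rcases orbitsDirected_or hE 1 2 with h12 | h21
    · exact .inr (.inr ((orbitBetween_of_orbitsDirected hE h12 h20).symm hE))
    · exact .inr (.inl ((orbitBetween_of_orbitsDirected hE h21 h10).symm hE))

theorem false_of_isMulPeriod_of_not_isMulPeriod (hE : IsEquivariant ρ E) {u v : V₄}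
    (h01 : IsMulPeriod (C 0 1) u) (h02 : IsMulPeriod (C 0 2) v)
    (n01 : ¬ IsMulPeriod (C 0 1) v) (n02 : ¬ IsMulPeriod (C 0 2) u)
    (n12 : ¬ IsMulPeriod (C 1 2) u) : False := by
  have hu : u ≠ 1 := by rintro rfl; exact n02 (isMulPeriod_one _)
  have hv : v ≠ 1 := by rintro rfl; exact n01 (isMulPeriod_one _)
  have huv : u ≠ v := by rintro rfl; exact n01 h01
  obtain ⟨z, hz⟩ := exists_of_not_isMulPeriod n01
  obtain ⟨y, hy⟩ := exists_of_not_isMulPeriod n02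
  obtain ⟨b, hb⟩ := exists_of_not_isMulPeriod n12
  -- comparabilities compose through the middle orbit, and a `u`-coset times a `v`-coset is `V₄`
  rcases orbitBetween_cases hE with hm | hm | hm
  · refine n12 (isMulPeriod_of_forall (fun g => ?_) u)
    obtain ⟨e, f, he, hf, rfl⟩ := klein_exists_eq_mul_mul u v (z * y) g hu hv huv
    have := hm _ _ (h01.mul_mem he hz) (h02.mul_mem hf hy)
    rwa [mul_mul_mul_comm, ← mul_assoc] at this
  · rw [OrbitBetween, orbitComparable_comm hE 0 1] at hm
    refine n02 (isMulPeriod_of_forall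
      (klein_forall_of_isMulPeriod h02 hu hv huv (hm _ _ hz hb) ?_) u)
    rw [mul_right_comm]
    exact hm _ _ ((h01 z).mpr hz) hb
  · rw [OrbitBetween, orbitComparable_comm hE 0 2, orbitComparable_comm hE 1 2] at hm
    refine n01 (isMulPeriod_of_forall
      (klein_forall_of_isMulPeriod h01 hv hu huv.symm (hm _ _ hy hb) ?_) v)
    rw [mul_right_comm]
    exact hm _ _ ((h02 y).mpr hy) hb

theorem false_of_isMulPeriod (hρ : Function.Surjective ρ) (hE : IsEquivariant ρ E) {u v : V₄}
    (h01 : IsMulPeriod (C 0 1) u) (h02 : IsMulPeriod (C 0 2) v) (hu : u ≠ 1) (hv : v ≠ 1) :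
    False := by
  refine false_of_isMulPeriod_of_not_isMulPeriod hE h01 h02 (fun h => hv ?_) (fun h => hu ?_)
    (fun h => hu ?_)
  · exact eq_one_of_isMulPeriod hρ hE h h02 (klein_mul_self v ▸ isMulPeriod_one _)
  · exact eq_one_of_isMulPeriod hρ hE h01 h (klein_mul_self u ▸ isMulPeriod_one _)
  · exact eq_one_of_isMulPeriod hρ hE h01 (isMulPeriod_one _) ((mul_one u).symm ▸ h)

end KleinFour

/-- The group `ℤ/2ℤ × ℤ/2ℤ` does not admit a semi-regular poset
representation with three orbits. -/
theorem klein_no_three_orbit_semiRegular :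
    ¬ HasSemiRegularPosetRep.{0, v} (Multiplicative (ZMod 2 × ZMod 2)) 3 := by
  rintro ⟨P, _, ρ, hfree, reps, huniq⟩
  obtain ⟨E, hE⟩ := exists_isEquivariant_of_free (ρ := ρ.toMonoidHom) hfree reps huniq
  have hρ : Function.Surjective ρ.toMonoidHom := ρ.surjective
  have relabel (σ : Perm (Fin 3)) :
      IsEquivariant ρ.toMonoidHom ((σ.prodCongr (.refl _)).trans E) :=
    fun i => hE (σ i)
  have h10 := orbitComparable_comm hE 0 1
  have h20 := orbitComparable_comm hE 0 2
  have h21 := orbitComparable_comm hE 1 2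
  -- two pairs of orbits of the same kind meet at an orbit, which `relabel` moves to `0`
  rcases klein_isConstOffPoint_or_isMulPeriod (OrbitComparable E 0 1) with
    ⟨_, h01⟩ | ⟨_, hu01, h01⟩ <;>
  rcases klein_isConstOffPoint_or_isMulPeriod (OrbitComparable E 0 2) with
    ⟨_, h02⟩ | ⟨_, hu02, h02⟩ <;>
  rcases klein_isConstOffPoint_or_isMulPeriod (OrbitComparable E 1 2) with
    ⟨_, h12⟩ | ⟨_, hu12, h12⟩
  · exact false_of_isConstOffPoint hρ hE h01 h02
  · exact false_of_isConstOffPoint hρ hE h01 h02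
  · exact false_of_isConstOffPoint hρ (relabel (swap 0 1)) (h10 ▸ h01) h12
  · exact false_of_isMulPeriod hρ (relabel (swap 0 2)) (h21 ▸ h12) (h20 ▸ h02) hu12 hu02
  · exact false_of_isConstOffPoint hρ (relabel (swap 0 2)) (h21 ▸ h12) (h20 ▸ h02)
  · exact false_of_isMulPeriod hρ (relabel (swap 0 1)) (h10 ▸ h01) h12 hu01 hu12
  · exact false_of_isMulPeriod hρ hE h01 h02 hu01 hu02
  · exact false_of_isMulPeriod hρ hE h01 h02 hu01 hu02
end

section
/- None of the groups ℤ/3ℤ, ℤ/4ℤ, ℤ/5ℤ, ℤ/6ℤ, ℤ/7ℤ, (ℤ/2ℤ)², (ℤ/2ℤ)³, (ℤ/2ℤ)⁴, (ℤ/3ℤ)², the symmetric group S₃, and the quaternion group Q₈ admits a semi-regular poset representation with two orbits. -/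
/-!
Let `ρ` be a free two-orbit representation with representatives `a`, `b`. An element of finite
order cannot move a point strictly upwards, so each orbit is an antichain and, after swapping
`a` and `b`, no point of the orbit of `b` lies below the orbit of `a`. The poset is then the
two-level order on `G ⊕ G` given by `S = {g | a ≤ ρ g b}`, and since every order automorphism is
some `ρ z`, the only level-preserving automorphisms of that order are left translations: `S` is
rigid. A rigid `S` has trivial stabiliser in the holomorph `Aut G ⋉ G`, so its images
`σ(S)·y` are `|Aut G|·|G|` distinct subsets of size `|S|`, forcing
`|Aut G|·|G| ≤ C(|G|, ⌊|G|/2⌋)`. This fails for every listed group except `ℤ/6`, by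
`|Aut ℤ/n| = φ(n)`, `|Aut (ℤ/p)ⁿ| = |GL_n(𝔽_p)|`, the inner automorphisms of `S₃` and nine
explicit automorphisms of `Q₈`; for `ℤ/6` a compatible non-translation pair is exhibited for
every subset.
-/

universe u v

open Function Module

theorem OrderIso.apply_eq_of_le_apply {P : Type*} [PartialOrder P] {f : P ≃o P}
    (hf : IsOfFinOrder f) {p : P} (h : p ≤ f p) : f p = p := by
  have le_pow : ∀ n : ℕ, p ≤ (f ^ n) p := by
    intro n
    induction n with
    | zero => rfl
    | succ n ih => exact h.trans (by rw [pow_succ', RelIso.mul_apply]; exact f.monotone ih)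
  obtain ⟨n, hn, hfn⟩ := hf.exists_pow_eq_one
  refine le_antisymm ?_ h
  calc f p ≤ f ((f ^ (n - 1)) p) := f.monotone (le_pow _)
    _ = p := by rw [← RelIso.mul_apply, ← pow_succ', Nat.sub_add_cancel hn, hfn]; rfl

/-- The order pulled back along `inl g ↦ ρ g a`, `inr g ↦ ρ g b` from a free two-orbit
representation in which no point of the orbit of `b` lies below the orbit of `a`, with
`S = {g | a ≤ ρ g b}`. -/
def TwoLevelLE {G : Type*} [Group G] (S : Set G) : G ⊕ G → G ⊕ G → Prop
  | .inl g, .inl h => g = h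
  | .inl g, .inr h => g⁻¹ * h ∈ S
  | .inr _, .inl _ => False
  | .inr g, .inr h => g = h

/-- `S` is rigid if the only pairs of bijections acting on the two levels of `TwoLevelLE S`
and preserving it are the simultaneous left translations. -/
def Rigid (G : Type*) [Group G] (S : Set G) : Prop :=
  ∀ α β : G → G, Bijective α → Bijective β →
    (∀ g h : G, g⁻¹ * h ∈ S ↔ (α g)⁻¹ * β h ∈ S) →
    ∃ z : G, (∀ g, α g = z * g) ∧ (∀ h, β h = z * h)

theorem twoLevelLE_sumMap_iff {G : Type*} [Group G] {S : Set G} {α β : G → G}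
    (hα : Injective α) (hβ : Injective β)
    (hαβ : ∀ g h : G, g⁻¹ * h ∈ S ↔ (α g)⁻¹ * β h ∈ S) (x y : G ⊕ G) :
    TwoLevelLE S (Sum.map α β x) (Sum.map α β y) ↔ TwoLevelLE S x y := by
  rcases x with g | g <;> rcases y with h | h
  · exact hα.eq_iff
  · exact (hαβ g h).symm
  · exact Iff.rfl
  · exact hβ.eq_iff

namespace MulEquiv

variable {G : Type*} [Group G] {P : Type*} [PartialOrder P] (ρ : G ≃* (P ≃o P))

theorem orderIso_mul_apply (g h : G) (p : P) : ρ (g * h) p = ρ g (ρ h p) := by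
  rw [map_mul, RelIso.mul_apply]

theorem orderIso_apply_le_apply_iff (g h : G) (p q : P) :
    ρ g p ≤ ρ h q ↔ p ≤ ρ (g⁻¹ * h) q := by
  conv_rhs => rw [← (ρ g).le_iff_le, ← orderIso_mul_apply, mul_inv_cancel_left]

variable [Finite G]

theorem orderIso_apply_eq_of_le_apply {g : G} {p : P} (h : p ≤ ρ g p) : ρ g p = p :=
  OrderIso.apply_eq_of_le_apply (ρ.toMonoidHom.isOfFinOrder (isOfFinOrder_of_finite g)) h

variable {ρ}

theorem eq_of_orderIso_apply_le_apply (hfree : ∀ (g : G) (p : P), ρ g p = p → g = 1)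
    {g h : G} {p : P} (hle : ρ g p ≤ ρ h p) : g = h := by
  rw [orderIso_apply_le_apply_iff] at hle
  exact inv_mul_eq_one.mp (hfree _ _ (orderIso_apply_eq_of_le_apply ρ hle))

theorem sumElim_orderIso_le_iff (hfree : ∀ (g : G) (p : P), ρ g p = p → g = 1) {a b : P}
    (hba : ∀ g : G, ¬ b ≤ ρ g a) (x y : G ⊕ G) :
    Sum.elim (ρ · a) (ρ · b) x ≤ Sum.elim (ρ · a) (ρ · b) y ↔
      TwoLevelLE {g | a ≤ ρ g b} x y := by
  rcases x with g | g <;> rcases y with h | h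
  · exact ⟨eq_of_orderIso_apply_le_apply hfree, fun e => e ▸ le_rfl⟩
  · exact orderIso_apply_le_apply_iff ρ g h a b
  · exact iff_of_false ((orderIso_apply_le_apply_iff ρ g h b a).not.mpr (hba _)) not_false
  · exact ⟨eq_of_orderIso_apply_le_apply hfree, fun e => e ▸ le_rfl⟩


theorem bijective_sumElim (hfree : ∀ (g : G) (p : P), ρ g p = p → g = 1) {a b : P}
    (hcover : ∀ p, (∃ g, ρ g a = p) ∨ ∃ g, ρ g b = p) (hdisj : ∀ g h : G, ρ g a ≠ ρ h b) :
    Bijective (Sum.elim (ρ · a) (ρ · b)) := by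
  have horbit : ∀ {g h : G} {p : P}, ρ g p = ρ h p → g = h :=
    fun e => eq_of_orderIso_apply_le_apply hfree e.le
  refine ⟨?_, fun p => ?_⟩
  · rintro (g | g) (h | h) e
    exacts [congrArg _ (horbit e), (hdisj g h e).elim, (hdisj h g e.symm).elim,
      congrArg _ (horbit e)]
  · rcases hcover p with ⟨g, rfl⟩ | ⟨g, rfl⟩
    exacts [⟨.inl g, rfl⟩, ⟨.inr g, rfl⟩]

theorem not_le_orderIso_apply_of_le {a b : P} (hdisj : ∀ g h : G, ρ g a ≠ ρ h b) {g₀ : G}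
    (hba : b ≤ ρ g₀ a) (g : G) : ¬ a ≤ ρ g b := by
  intro hab
  have hb_le : ρ g b ≤ ρ (g * g₀) a := by
    rw [orderIso_mul_apply]; exact (ρ g).monotone hba
  have hfix : ρ (g * g₀) a = a := orderIso_apply_eq_of_le_apply ρ (hab.trans hb_le)
  refine hdisj 1 g ?_
  rw [map_one, RelIso.coe_one, id]
  exact le_antisymm hab (hfix ▸ hb_le)

theorem rigid_of_bijective_sumElim (hfree : ∀ (g : G) (p : P), ρ g p = p → g = 1) {a b : P}
    (hbij : Bijective (Sum.elim (ρ · a) (ρ · b))) (hba : ∀ g : G, ¬ b ≤ ρ g a) :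
    Rigid G {g | a ≤ ρ g b} := by
  intro α β hα hβ hαβ
  set e := Equiv.ofBijective _ hbij
  set m := Equiv.sumCongr (Equiv.ofBijective α hα) (Equiv.ofBijective β hβ)
  have hle : ∀ x y, e x ≤ e y ↔ TwoLevelLE {g | a ≤ ρ g b} x y :=
    sumElim_orderIso_le_iff hfree hba
  let φ : P ≃o P :=
    { toEquiv := e.symm.trans (m.trans e)
      map_rel_iff' := fun {p q} => by
        refine (hle _ _).trans <|
          (twoLevelLE_sumMap_iff hα.injective hβ.injective hαβ _ _).trans ?_
        rw [← hle, e.apply_symm_apply, e.apply_symm_apply] }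
  obtain ⟨z, hz⟩ := ρ.surjective φ
  have hφ : ∀ x, ρ z (e x) = e (m x) := fun x => by
    rw [hz]; exact congrArg (e ∘ m) (e.symm_apply_apply x)
  refine ⟨z, fun g => ?_, fun h => ?_⟩
  · have h_orbit : ρ (z * g) a = ρ (α g) a := (orderIso_mul_apply ρ z g a).trans (hφ (.inl g))
    exact Sum.inl_injective (hbij.injective (a₁ := .inl _) (a₂ := .inl _) h_orbit).symm
  · have h_orbit : ρ (z * h) b = ρ (β h) b := (orderIso_mul_apply ρ z h b).trans (hφ (.inr h))
    exact Sum.inr_injective (hbij.injective (a₁ := .inr _) (a₂ := .inr _) h_orbit).symm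

end MulEquiv

theorem exists_rigid_of_hasSemiRegularPosetRep_two {G : Type u} [Group G] [Finite G]
    (h : HasSemiRegularPosetRep.{u, v} G 2) : ∃ S : Set G, Rigid G S := by
  obtain ⟨P, _, ρ, hfree, reps, hreps⟩ := h
  have hcover : ∀ p, (∃ g, ρ g (reps 0) = p) ∨ ∃ g, ρ g (reps 1) = p :=
    fun p => Fin.exists_fin_two.mp (hreps p).exists
  have hdisj : ∀ g h : G, ρ g (reps 0) ≠ ρ h (reps 1) :=
    fun g h e => zero_ne_one ((hreps _).unique ⟨g, rfl⟩ ⟨h, e.symm⟩)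
  by_cases hba : ∃ g₀, reps 1 ≤ ρ g₀ (reps 0)
  · obtain ⟨g₀, hg₀⟩ := hba
    refine ⟨_, ρ.rigid_of_bijective_sumElim hfree (ρ.bijective_sumElim hfree
      (fun p => (hcover p).symm) fun g h e => hdisj h g e.symm) ?_⟩
    exact ρ.not_le_orderIso_apply_of_le hdisj hg₀
  · exact ⟨_, ρ.rigid_of_bijective_sumElim hfree (ρ.bijective_sumElim hfree hcover hdisj)
      (not_exists.mp hba)⟩

namespace Rigid

variable {G : Type*} [Group G] {S : Set G}

theorem eq_one_of_mem_iff (hS : Rigid G S) {τ : MulAut G} {u : G}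
    (h : ∀ t, t ∈ S ↔ τ t * u ∈ S) : τ = 1 ∧ u = 1 := by
  obtain ⟨z, hτ, hτu⟩ := hS τ (τ · * u) τ.bijective
    ((Equiv.mulRight u).bijective.comp τ.bijective)
    fun g h' => by rw [h (g⁻¹ * h'), map_mul, map_inv, mul_assoc]
  obtain rfl : z = 1 := by simpa using (hτ 1).symm
  exact ⟨MulEquiv.ext fun g => by simpa using hτ g, by simpa using hτu 1⟩

theorem eq_of_image_eq (hS : Rigid G S) {σ τ : MulAut G} {x y : G}
    (h : (σ · * x) '' S = (τ · * y) '' S) : σ = τ ∧ x = y := by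
  have hσ : Injective (σ · * x) := (mul_left_injective x).comp σ.injective
  have hτ : Injective (τ · * y) := (mul_left_injective y).comp τ.injective
  have hσt : ∀ t, σ t * x = τ ((τ⁻¹ * σ) t * τ⁻¹ (x * y⁻¹)) * y := fun t => by
    simp [mul_assoc]
  have hmem : ∀ t, t ∈ S ↔ (τ⁻¹ * σ) t * τ⁻¹ (x * y⁻¹) ∈ S := fun t => by
    rw [← hσ.mem_set_image, h, hσt, hτ.mem_set_image]
  obtain ⟨hστ, hxy⟩ := hS.eq_one_of_mem_iff hmem
  exact ⟨(inv_mul_eq_one.mp hστ).symm,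
    mul_inv_eq_one.mp ((map_eq_one_iff _ τ⁻¹.injective).mp hxy)⟩

theorem card_mulAut_mul_card_le_choose [Finite G] (hS : Rigid G S) :
    Nat.card (MulAut G) * Nat.card G ≤ (Nat.card G).choose (Nat.card G / 2) := by
  classical
  have := Fintype.ofFinite G
  set T := S.toFinset
  let F : MulAut G × G → {A : Finset G // A.card = T.card} := fun p =>
    ⟨T.image (p.1 · * p.2),
      Finset.card_image_of_injective _ ((mul_left_injective p.2).comp p.1.injective)⟩
  have hF : Injective F := fun p q hpq => by
    have := congrArg (fun A : {A : Finset G // A.card = T.card} => (A.1 : Set G)) hpq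
    simp only [F, Finset.coe_image, T, Set.coe_toFinset] at this
    obtain ⟨hσ, hy⟩ := hS.eq_of_image_eq this
    exact Prod.ext hσ hy
  calc Nat.card (MulAut G) * Nat.card G = Nat.card (MulAut G × G) := Nat.card_prod .. |>.symm
    _ ≤ Nat.card {A : Finset G // A.card = T.card} := Nat.card_le_card_of_injective F hF
    _ = (Nat.card G).choose T.card := by simp [Nat.card_eq_fintype_card]
    _ ≤ (Nat.card G).choose (Nat.card G / 2) := Nat.choose_le_middle _ _

end Rigid

theorem card_mulAut_multiplicative (A : Type*) [AddGroup A] :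
    Nat.card (MulAut (Multiplicative A)) = Nat.card (AddAut A) :=
  Nat.card_congr ((MulAutMultiplicative A).toEquiv.trans Multiplicative.toAdd)

def AddAut.equivZModLinearEquiv (p : ℕ) (V : Type*) [AddCommGroup V] [Module (ZMod p) V] :
    AddAut V ≃ (V ≃ₗ[ZMod p] V) where
  toFun e := e.toLinearEquiv (ZMod.map_smul e)
  invFun e := e.toAddEquiv
  left_inv _ := rfl
  right_inv _ := rfl

theorem card_addAut_eq_card_GL (p : ℕ) [Fact p.Prime] (V : Type*) [AddCommGroup V]
    [Module (ZMod p) V] [Finite V] :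
    Nat.card (AddAut V) = Nat.card (GL (Fin (finrank (ZMod p) V)) (ZMod p)) :=
  Nat.card_congr <| (AddAut.equivZModLinearEquiv p V).trans <|
    (LinearMap.GeneralLinearGroup.generalLinearEquiv _ _).toEquiv.symm.trans
      (Units.mapEquiv (LinearMap.toMatrixAlgEquiv (finBasis (ZMod p) V)).toMulEquiv).toEquiv

theorem card_mulAut_multiplicative_eq_prod (p : ℕ) [Fact p.Prime] (V : Type*) [AddCommGroup V]
    [Module (ZMod p) V] [Finite V] :
    Nat.card (MulAut (Multiplicative V)) =
      ∏ i : Fin (finrank (ZMod p) V), (p ^ finrank (ZMod p) V - p ^ (i : ℕ)) := by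
  rw [card_mulAut_multiplicative, card_addAut_eq_card_GL p, Matrix.card_GL_field, ZMod.card]

theorem not_hasSemiRegularPosetRep_two_of_le_card_mulAut {G : Type u} [Group G] [Finite G]
    {m : ℕ} (hm : m ≤ Nat.card (MulAut G))
    (h : (Nat.card G).choose (Nat.card G / 2) < m * Nat.card G) :
    ¬ HasSemiRegularPosetRep.{u, v} G 2 := fun hG =>
  let ⟨_, hS⟩ := exists_rigid_of_hasSemiRegularPosetRep_two hG
  (h.trans_le (Nat.mul_le_mul_right _ hm)).not_ge hS.card_mulAut_mul_card_le_choose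

theorem card_le_card_mulAut_of_center_eq_bot {G : Type*} [Group G] [Finite G]
    (h : Subgroup.center G = ⊥) : Nat.card G ≤ Nat.card (MulAut G) := by
  refine Nat.card_le_card_of_injective MulAut.conj <| (injective_iff_map_eq_one _).mpr
    fun g hg => (Subgroup.mem_bot.mp (h ▸ Subgroup.mem_center_iff.mpr fun x => ?_))
  simpa [eq_mul_inv_iff_mul_eq] using (DFunLike.congr_fun hg x).symm

theorem card_le_card_mulAut_of_injective {G ι : Type*} [Group G] [Finite G] (f : ι → G → G)
    (hmul : ∀ i x y, f i (x * y) = f i x * f i y) (hbij : ∀ i, Bijective (f i))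
    (hf : Injective f) : Nat.card ι ≤ Nat.card (MulAut G) :=
  Nat.card_le_card_of_injective (fun i => MulEquiv.ofBijective (MonoidHom.mk' (f i) (hmul i))
    (hbij i)) fun _ _ hij => hf (congrArg DFunLike.coe hij)

theorem not_hasSemiRegularPosetRep_two_zmod (n : ℕ) [NeZero n]
    (h : n.choose (n / 2) < n.totient * n) :
    ¬ HasSemiRegularPosetRep.{0, v} (Multiplicative (ZMod n)) 2 := by
  have hcard : Nat.card (Multiplicative (ZMod n)) = n :=
    (Nat.card_congr Multiplicative.toAdd).trans (Nat.card_zmod n)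
  refine not_hasSemiRegularPosetRep_two_of_le_card_mulAut
    (IsCyclic.card_mulAut (Multiplicative (ZMod n))).ge ?_
  rwa [hcard]

theorem not_hasSemiRegularPosetRep_two_multiplicative (p : ℕ) [Fact p.Prime] (V : Type u)
    [AddCommGroup V] [Module (ZMod p) V] [Finite V] {n : ℕ} (hn : finrank (ZMod p) V = n)
    (h : (p ^ n).choose (p ^ n / 2) < (∏ i : Fin n, (p ^ n - p ^ (i : ℕ))) * p ^ n) :
    ¬ HasSemiRegularPosetRep.{u, v} (Multiplicative V) 2 := by
  have := Fintype.ofFinite V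
  have hcard : Nat.card (Multiplicative V) = p ^ n := by
    rw [Nat.card_congr Multiplicative.toAdd, Nat.card_eq_fintype_card,
      Module.card_eq_pow_finrank (K := ZMod p), ZMod.card, hn]
  subst hn
  refine not_hasSemiRegularPosetRep_two_of_le_card_mulAut
    (card_mulAut_multiplicative_eq_prod p V).ge ?_
  rwa [hcard]

/-- `none` is the automorphism of order three permuting the three cyclic subgroups of order
four (`i ↦ j ↦ k` with `i = a 1`, `j = xa 0`). -/
def quaternionAutFamily :
    Option ((ZMod 4)ˣ × ZMod 4) → QuaternionGroup 2 → QuaternionGroup 2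
  | some (s, _), .a i => .a (s * i)
  | some (s, k), .xa j => .xa (s * j + k)
  | none, .a i => ![.a 0, .xa 0, .a 2, .xa 2] i
  | none, .xa j => ![.a 1, .xa 3, .a 3, .xa 1] j

theorem not_hasSemiRegularPosetRep_two_quaternionGroup :
    ¬ HasSemiRegularPosetRep.{0, v} (QuaternionGroup 2) 2 := by
  have hcard : Nat.card (QuaternionGroup 2) = 8 := by
    rw [Nat.card_eq_fintype_card, QuaternionGroup.card]
  have haut : 9 ≤ Nat.card (MulAut (QuaternionGroup 2)) :=
    calc 9 = Nat.card (Option ((ZMod 4)ˣ × ZMod 4)) := by rw [Nat.card_eq_fintype_card]; rfl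
      _ ≤ _ := card_le_card_mulAut_of_injective quaternionAutFamily (by decide) (by decide)
        (by decide)
  exact not_hasSemiRegularPosetRep_two_of_le_card_mulAut haut (by rw [hcard]; decide)

theorem not_hasSemiRegularPosetRep_two_perm_fin_three :
    ¬ HasSemiRegularPosetRep.{0, v} (Equiv.Perm (Fin 3)) 2 := by
  have hcard : Nat.card (Equiv.Perm (Fin 3)) = 6 := by rw [Nat.card_perm, Nat.card_fin]; rfl
  have hcenter : Subgroup.center (Equiv.Perm (Fin 3)) = ⊥ := by
    rw [Subgroup.eq_bot_iff_forall]
    simp only [Subgroup.mem_center_iff]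
    decide
  exact not_hasSemiRegularPosetRep_two_of_le_card_mulAut
    (card_le_card_mulAut_of_center_eq_bot hcenter) (by rw [hcard]; decide)

local notation "C₆" => Multiplicative (ZMod 6)

/-- The last three pairs were found by computer search; they handle the holomorph orbit of
`{0, 1, 3}`, which consists of the only subsets with trivial stabiliser in the holomorph. -/
def zmodSixCandidates : List (Equiv.Perm C₆ × Equiv.Perm C₆) :=
  let e : ZMod 6 → C₆ := Multiplicative.ofAdd
  (List.range 6).flatMap (fun c =>
    [(1, Equiv.mulRight (e c)), (Equiv.inv C₆, (Equiv.inv C₆).trans (Equiv.mulRight (e c)))]) ++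
  [(Equiv.swap (e 2) (e 5), Equiv.swap (e 2) (e 5)),
   (Equiv.swap (e 1) (e 4), Equiv.swap (e 2) (e 5)),
   (Equiv.swap (e 0) (e 3), Equiv.swap (e 2) (e 5))]

theorem exists_compatible_nontranslation_zmodSix (T : Finset C₆) :
    ∃ p ∈ zmodSixCandidates, (∀ g h : C₆, g⁻¹ * h ∈ T ↔ (p.1 g)⁻¹ * p.2 h ∈ T) ∧
      ¬ ∃ z : C₆, (∀ g, p.1 g = z * g) ∧ ∀ h, p.2 h = z * h := by
  revert T
  decide

theorem not_hasSemiRegularPosetRep_two_zmodSix : ¬ HasSemiRegularPosetRep.{0, v} C₆ 2 := by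
  classical
  intro h
  obtain ⟨S, hS⟩ := exists_rigid_of_hasSemiRegularPosetRep_two h
  obtain ⟨p, -, hcompat, hnot⟩ := exists_compatible_nontranslation_zmodSix S.toFinset
  simp only [Set.mem_toFinset] at hcompat
  exact hnot (hS p.1 p.2 p.1.bijective p.2.bijective hcompat)

/-- None of `ℤ/3, ℤ/4, ℤ/5, ℤ/6, ℤ/7, (ℤ/2)², (ℤ/2)³, (ℤ/2)⁴, (ℤ/3)²`,
the symmetric group `S₃` and the quaternion group `Q₈` admits a semi-regular poset
representation with two orbits. -/
theorem small_groups_no_two_orbit_semiRegular :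
    ¬ HasSemiRegularPosetRep.{0, v} (Multiplicative (ZMod 3)) 2 ∧
    ¬ HasSemiRegularPosetRep.{0, v} (Multiplicative (ZMod 4)) 2 ∧
    ¬ HasSemiRegularPosetRep.{0, v} (Multiplicative (ZMod 5)) 2 ∧
    ¬ HasSemiRegularPosetRep.{0, v} (Multiplicative (ZMod 6)) 2 ∧
    ¬ HasSemiRegularPosetRep.{0, v} (Multiplicative (ZMod 7)) 2 ∧
    ¬ HasSemiRegularPosetRep.{0, v} (Multiplicative (ZMod 2 × ZMod 2)) 2 ∧
    ¬ HasSemiRegularPosetRep.{0, v} (Multiplicative (ZMod 2 × ZMod 2 × ZMod 2)) 2 ∧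
    ¬ HasSemiRegularPosetRep.{0, v} (Multiplicative (ZMod 2 × ZMod 2 × ZMod 2 × ZMod 2)) 2 ∧
    ¬ HasSemiRegularPosetRep.{0, v} (Multiplicative (ZMod 3 × ZMod 3)) 2 ∧
    ¬ HasSemiRegularPosetRep.{0, v} (Equiv.Perm (Fin 3)) 2 ∧
    ¬ HasSemiRegularPosetRep.{0, v} (QuaternionGroup 2) 2 :=
  ⟨not_hasSemiRegularPosetRep_two_zmod 3 (by decide),
    not_hasSemiRegularPosetRep_two_zmod 4 (by decide),
    not_hasSemiRegularPosetRep_two_zmod 5 (by decide),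
    not_hasSemiRegularPosetRep_two_zmodSix,
    not_hasSemiRegularPosetRep_two_zmod 7 (by decide),
    not_hasSemiRegularPosetRep_two_multiplicative 2 _ (n := 2) (by simp) (by decide),
    not_hasSemiRegularPosetRep_two_multiplicative 2 _ (n := 3) (by simp) (by decide),
    not_hasSemiRegularPosetRep_two_multiplicative 2 _ (n := 4) (by simp) (by decide),
    not_hasSemiRegularPosetRep_two_multiplicative 3 _ (n := 2) (by simp) (by decide),
    not_hasSemiRegularPosetRep_two_perm_fin_three,
    not_hasSemiRegularPosetRep_two_quaternionGroup⟩
end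

section
/- Let d ≥ 1 and let w₁, w₂, …, w_k be non-trivial elements of the free group F_d of rank d. Then there exists a non-trivial element w ∈ F_d such that for every group G, every index 1 ≤ i ≤ k, and every d-tuple (x₁, …, x_d) of elements of G, if w_i evaluates to the identity at (x₁, …, x_d) then w also evaluates to the identity at (x₁, …, x_d). -/
/-!
A nontrivial word lying in the normal closure of every `wᵢ` does the job, so it suffices that
nontrivial normal subgroups `N, M` of a free group meet nontrivially. Take nontrivial `u ∈ N`,
`v ∈ M`: the commutator `⁅u, v⁆` lies in `N ⊓ M`, and if it is trivial then `u` and `v` commute,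
so they generate an abelian free (Nielsen–Schreier), hence infinite cyclic, subgroup, in which
they have a common nontrivial power.
-/

theorem FreeGroup.not_commute_of_ne {α : Type*} {a b : α} (h : a ≠ b) :
    ¬Commute (of a) (of b) := by
  classical
  intro hc
  let f : α → Equiv.Perm (Fin 3) := fun x => if x = a then Equiv.swap 0 1 else Equiv.swap 1 2
  have := hc.map (FreeGroup.lift f)
  simp only [FreeGroup.lift_apply_of, f, ↓reduceIte, if_neg h.symm] at this
  exact absurd this.eq (by decide)

open scoped IsMulCommutative in
theorem IsFreeGroup.isCyclic_of_isMulCommutative {G : Type*} [Group G] [IsFreeGroup G]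
    [IsMulCommutative G] : IsCyclic G := by
  have : Subsingleton (Generators G) := ⟨fun s t => by
    by_contra h
    exact FreeGroup.not_commute_of_ne h <| by
      simpa [of] using (Commute.all (of s) (of t)).map (toFreeGroup G)⟩
  rw [(toFreeGroup G).isCyclic]
  cases isEmpty_or_nonempty (Generators G)
  · infer_instance
  · have := uniqueOfSubsingleton (Classical.arbitrary (Generators G))
    infer_instance

theorem IsCyclic.exists_ne_one_mem_zpowers_inf {G : Type*} [Group G] [IsCyclic G]
    [IsMulTorsionFree G] {a b : G} (ha : a ≠ 1) (hb : b ≠ 1) :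
    ∃ c ≠ 1, c ∈ Subgroup.zpowers a ⊓ Subgroup.zpowers b := by
  obtain ⟨g, hg⟩ := IsCyclic.exists_generator (α := G)
  obtain ⟨m, rfl⟩ := hg a
  obtain ⟨n, rfl⟩ := hg b
  refine ⟨g ^ (m * n), ?_, ⟨n, ?_⟩, ⟨m, ?_⟩⟩
  · rw [zpow_mul, Ne, IsMulTorsionFree.zpow_eq_one_iff_right ha]
    rintro rfl
    exact hb (zpow_zero g)
  · simp [← zpow_mul]
  · simp [← zpow_mul, mul_comm]

theorem FreeGroup.exists_ne_one_mem_zpowers_inf_of_commute {α : Type*} {u v : FreeGroup α}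
    (hu : u ≠ 1) (hv : v ≠ 1) (huv : Commute u v) :
    ∃ c ≠ 1, c ∈ Subgroup.zpowers u ⊓ Subgroup.zpowers v := by
  let H := Subgroup.closure {u, v}
  have : IsMulCommutative H := Subgroup.isMulCommutative_closure <| by
    rintro x (rfl | rfl) y (rfl | rfl) <;> simp [huv.eq]
  have : IsCyclic H := IsFreeGroup.isCyclic_of_isMulCommutative
  let u' : H := ⟨u, Subgroup.subset_closure (by simp)⟩
  let v' : H := ⟨v, Subgroup.subset_closure (by simp)⟩
  obtain ⟨c, hc, ⟨m, hm⟩, ⟨n, hn⟩⟩ :=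
    IsCyclic.exists_ne_one_mem_zpowers_inf (a := u') (b := v') (by simpa [u']) (by simpa [v'])
  refine ⟨c, by simpa using hc, ⟨m, ?_⟩, ⟨n, ?_⟩⟩
  · simp [← hm, u']
  · simp [← hn, v']

open scoped commutatorElement in
theorem FreeGroup.inf_ne_bot {α : Type*} {N₁ N₂ : Subgroup (FreeGroup α)} [N₁.Normal] [N₂.Normal]
    (h₁ : N₁ ≠ ⊥) (h₂ : N₂ ≠ ⊥) : N₁ ⊓ N₂ ≠ ⊥ := by
  obtain ⟨u, hu, hu1⟩ := N₁.bot_or_exists_ne_one.resolve_left h₁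
  obtain ⟨v, hv, hv1⟩ := N₂.bot_or_exists_ne_one.resolve_left h₂
  suffices ∃ c ∈ N₁ ⊓ N₂, c ≠ 1 by
    obtain ⟨c, hc, hc1⟩ := this
    exact Subgroup.ne_bot_iff_exists_ne_one.mpr ⟨⟨c, hc⟩, by simpa using hc1⟩
  by_cases huv : Commute u v
  · obtain ⟨c, hc1, hcu, hcv⟩ := exists_ne_one_mem_zpowers_inf_of_commute hu1 hv1 huv
    exact ⟨c, ⟨Subgroup.zpowers_le.mpr hu hcu, Subgroup.zpowers_le.mpr hv hcv⟩, hc1⟩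
  · exact ⟨⁅u, v⁆, Subgroup.commutator_le_inf _ _ (Subgroup.commutator_mem_commutator hu hv),
      mt commutatorElement_eq_one_iff_commute.mp huv⟩

theorem FreeGroup.finsetInf_ne_bot {α ι : Type*} [Nonempty α] (s : Finset ι)
    (N : ι → Subgroup (FreeGroup α)) [∀ i, (N i).Normal] (hN : ∀ i ∈ s, N i ≠ ⊥) :
    s.inf N ≠ ⊥ := by
  refine (Finset.inf_induction (p := fun H : Subgroup (FreeGroup α) => H.Normal ∧ H ≠ ⊥)
    ⟨inferInstance, top_ne_bot⟩
    (fun _ ⟨_, h₁⟩ _ ⟨_, h₂⟩ => ⟨inferInstance, inf_ne_bot h₁ h₂⟩)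
    fun i hi => ⟨inferInstance, hN i hi⟩).2

/-- Given non-trivial words `w₁, …, w_k` in the free group of rank
`d ≥ 1`, there is a non-trivial word `w ∈ F_d` such that for every group `G` and every
`d`-tuple of elements of `G`, if some `w_i` evaluates to the identity at the tuple then
so does `w`. -/
theorem exists_common_consequence_word (d k : ℕ) (hd : 1 ≤ d)
    (ws : Fin k → FreeGroup (Fin d)) (hws : ∀ i, ws i ≠ 1) :
    ∃ w : FreeGroup (Fin d), w ≠ 1 ∧
      ∀ (G : Type*) [Group G] (i : Fin k) (x : Fin d → G),
        FreeGroup.lift x (ws i) = 1 → FreeGroup.lift x w = 1 := by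
  have : Nonempty (Fin d) := ⟨⟨0, hd⟩⟩
  let N i := Subgroup.normalClosure {ws i}
  have hN : ∀ i ∈ Finset.univ, N i ≠ ⊥ := fun i _ => by
    simpa [N, Subgroup.normalClosure_eq_bot_iff] using hws i
  obtain ⟨w, hw, hw1⟩ :=
    (Finset.univ.inf N).bot_or_exists_ne_one.resolve_left (FreeGroup.finsetInf_ne_bot _ N hN)
  refine ⟨w, hw1, fun G _ i x hx => ?_⟩
  have hker : N i ≤ (FreeGroup.lift x).ker := Subgroup.normalClosure_le_normal (by simpa using hx)
  exact hker (Finset.inf_le (f := N) (Finset.mem_univ i) hw)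
end

section
/- Let G be a group that is neither trivial nor isomorphic to ℤ/2ℤ, and suppose G admits a graded regular poset representation: a regular poset representation by a partial order P for which there exists a function ρ : P → ℤ such that x < y implies ρ(x) < ρ(y), and whenever y covers x one has ρ(y) = ρ(x) + 1. Then G is indicable, i.e., there exists a surjective group homomorphism G → ℤ. -/
/-!
The rank shift `rk (σ x) - rk x` of an automorphism `σ` does not change along `x ≤ y`: a chain
of covers joins `x` to `y`, and each cover raises both `rk` and `rk ∘ σ` by one. Once `P` is
connected under comparability, the shift is therefore independent of `x`, hence a homomorphism
`Aut P → ℤ`, and it is `1` on the automorphism mapping the bottom of a cover to its top.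

Connectedness: an automorphism preserving one component, glued to the identity on the other
components, fixes a point, so it is trivial by freeness. Hence if `P` is disconnected, every
automorphism mapping `a` to some `b ≥ a` fixes `a`, and `P` is an antichain. Then every
transposition of `P` is an automorphism; as one fixing a point must be trivial, `P`, and with it
`G`, has exactly two elements.
-/

open Relation

theorem Relation.EqvGen.lift {α β : Type*} {r : α → α → Prop} {p : β → β → Prop} (f : α → β)
    (h : ∀ a b, r a b → p (f a) (f b)) {a b : α} (hab : EqvGen r a b) :
    EqvGen p (f a) (f b) := by
  induction hab with
  | rel a b hab => exact .rel _ _ (h a b hab)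
  | refl a => exact .refl _
  | symm a b _ ih => exact .symm _ _ ih
  | trans a b c _ _ ihab ihbc => exact .trans _ _ _ ihab ihbc

theorem Relation.EqvGen.apply_eq_apply {α β : Type*} {r : α → α → Prop} {f : α → β}
    (h : ∀ a b, r a b → f a = f b) {a b : α} (hab : EqvGen r a b) : f a = f b :=
  congrArg (Quot.lift f h) (Quot.eqvGen_sound hab)

section Grading

variable {P : Type*} [PartialOrder P] {f g : P → ℤ}

theorem StrictMono.transGen_covBy_of_lt (hf : StrictMono f) {x y : P} (hxy : x < y) :
    TransGen (· ⋖ ·) x y := by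
  by_cases hcov : x ⋖ y
  · exact .single hcov
  obtain ⟨z, hxz, hzy⟩ := exists_lt_lt_of_not_covBy hxy hcov
  have := hf hxz
  have := hf hzy
  exact (hf.transGen_covBy_of_lt hxz).trans (hf.transGen_covBy_of_lt hzy)
termination_by (f y - f x).toNat

theorem sub_eq_sub_of_le_of_covBy (hf : StrictMono f) (hfc : ∀ x y : P, x ⋖ y → f y = f x + 1)
    (hgc : ∀ x y : P, x ⋖ y → g y = g x + 1) {x y : P} (hxy : x ≤ y) :
    g x - f x = g y - f y := by
  obtain hlt | rfl := hxy.lt_or_eq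
  · have hchain := hf.transGen_covBy_of_lt hlt
    clear hxy hlt
    induction hchain with
    | single hcov => have := hfc _ _ hcov; have := hgc _ _ hcov; omega
    | tail _ hcov ih => have := hfc _ _ hcov; have := hgc _ _ hcov; omega
  · rfl

end Grading

section Component

open scoped Classical

variable {P : Type*} [Preorder P]

theorem eqvGen_le_iff_of_le (a : P) {x y : P} (hxy : x ≤ y) :
    EqvGen (· ≤ ·) a x ↔ EqvGen (· ≤ ·) a y :=
  ⟨fun h => h.trans _ _ _ (.rel _ _ hxy), fun h => h.trans _ _ _ (.symm _ _ (.rel _ _ hxy))⟩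

theorem OrderIso.eqvGen_le_apply_iff (e : P ≃o P) {a : P} (ha : EqvGen (· ≤ ·) a (e a))
    (x : P) : EqvGen (· ≤ ·) a (e x) ↔ EqvGen (· ≤ ·) a x := by
  have lift (e : P ≃o P) {x y : P} (h : EqvGen (· ≤ ·) x y) : EqvGen (· ≤ ·) (e x) (e y) :=
    h.lift e fun _ _ h => e.monotone h
  refine ⟨fun h => ?_, fun h => ha.trans _ _ _ (lift e h)⟩
  have hsymm : EqvGen (· ≤ ·) a (e.symm a) := .symm _ _ (by simpa using lift e.symm ha)
  simpa using hsymm.trans _ _ _ (lift e.symm h)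

theorem monotone_ite_eqvGen_le (e : P ≃o P) (a : P) :
    Monotone fun x => if EqvGen (· ≤ ·) a x then e x else x := by
  intro x y hxy
  by_cases hx : EqvGen (· ≤ ·) a x
  · simpa [hx, (eqvGen_le_iff_of_le a hxy).1 hx] using e.monotone hxy
  · simpa [hx, mt (eqvGen_le_iff_of_le a hxy).2 hx] using hxy

/-- The automorphism acting as `e` on the connected component of `a` in the comparability graph
and as the identity elsewhere. -/
noncomputable def OrderIso.onComponent (e : P ≃o P) (a : P) (ha : EqvGen (· ≤ ·) a (e a)) :
    P ≃o P :=
  have hsymm : EqvGen (· ≤ ·) a (e.symm a) := by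
    rw [← e.eqvGen_le_apply_iff ha, e.apply_symm_apply]
    exact .refl a
  Equiv.toOrderIso
    { toFun x := if EqvGen (· ≤ ·) a x then e x else x
      invFun x := if EqvGen (· ≤ ·) a x then e.symm x else x
      left_inv x := by by_cases hx : EqvGen (· ≤ ·) a x <;> simp [hx, e.eqvGen_le_apply_iff ha]
      right_inv x := by
        by_cases hx : EqvGen (· ≤ ·) a x <;> simp [hx, e.symm.eqvGen_le_apply_iff hsymm] }
    (monotone_ite_eqvGen_le e a) (monotone_ite_eqvGen_le e.symm a)

theorem OrderIso.onComponent_apply_of_eqvGen_le (e : P ≃o P) {a x : P}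
    (ha : EqvGen (· ≤ ·) a (e a)) (hx : EqvGen (· ≤ ·) a x) : e.onComponent a ha x = e x :=
  if_pos hx

theorem OrderIso.onComponent_apply_of_not_eqvGen_le (e : P ≃o P) {a x : P}
    (ha : EqvGen (· ≤ ·) a (e a)) (hx : ¬EqvGen (· ≤ ·) a x) : e.onComponent a ha x = x :=
  if_neg hx

end Component

section RegularRepresentation

variable {G P : Type*} [Group G] [PartialOrder P]

theorem exists_ne_of_mulEquiv_orderIso [Nontrivial G] (ρ : G ≃* (P ≃o P)) :
    ∃ p q : P, p ≠ q := by
  obtain ⟨a, b, hab⟩ := exists_pair_ne G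
  by_contra! h
  exact hab (ρ.injective (OrderIso.ext (funext fun p => h _ _)))

variable {ρ : G ≃* (P ≃o P)} (hfree : ∀ (g : G) (p : P), ρ g p = p → g = 1)
include hfree

theorem eq_one_of_apply_eq (τ : P ≃o P) {p : P} (hp : τ p = p) : τ = 1 := by
  have : ρ.symm τ = 1 := hfree _ p (by rwa [ρ.apply_symm_apply])
  simpa using congrArg ρ this

theorem eq_or_eq_of_le_imp_eq (hanti : ∀ a b : P, a ≤ b → a = b) {x y : P} (hne : x ≠ y)
    (r : P) : r = x ∨ r = y := by
  classical
  by_contra! hr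
  have hswap : Monotone (Equiv.swap x y) := fun a b hab => by rw [hanti a b hab]
  have := eq_one_of_apply_eq hfree (Equiv.toOrderIso _ hswap hswap) (p := r)
    (Equiv.swap_apply_of_ne_of_ne hr.1 hr.2)
  exact hne ((DFunLike.congr_fun this x).symm.trans (Equiv.swap_apply_left x y))

variable (htrans : ∀ p q : P, ∃ g : G, ρ g p = q)
include htrans

theorem bijective_apply_of_regular (p : P) : Function.Bijective fun g => ρ g p := by
  refine ⟨fun g h hgh => ?_, fun q => htrans p q⟩
  have : ρ (g⁻¹ * h) p = p := by
    simp only [map_mul, map_inv, RelIso.mul_apply] at hgh ⊢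
    rw [← hgh]; exact (ρ g).symm_apply_apply p
  exact inv_mul_eq_one.1 (hfree _ p this)

theorem le_imp_eq_of_not_eqvGen_le {x y : P} (hxy : ¬EqvGen (· ≤ ·) x y) (a b : P)
    (hab : a ≤ b) : a = b := by
  obtain ⟨g, rfl⟩ := htrans a b
  have ha : EqvGen (· ≤ ·) a (ρ g a) := .rel _ _ hab
  obtain ⟨z, hz⟩ : ∃ z, ¬EqvGen (· ≤ ·) a z := by
    by_contra! h
    exact hxy ((h x).symm _ _ |>.trans _ _ _ (h y))
  have := eq_one_of_apply_eq hfree _ ((ρ g).onComponent_apply_of_not_eqvGen_le ha hz)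
  rw [← (ρ g).onComponent_apply_of_eqvGen_le ha (.refl a), this, RelIso.one_apply]

theorem eqvGen_le_of_regular (h2 : IsEmpty (G ≃* Multiplicative (ZMod 2))) (x y : P) :
    EqvGen (· ≤ ·) x y := by
  by_contra hxy
  have hne : x ≠ y := fun h => hxy (h ▸ .refl x)
  have hP : Nat.card P = 2 := Nat.card_eq_two_iff.2 ⟨x, y, hne, Set.eq_univ_of_forall fun r =>
    eq_or_eq_of_le_imp_eq hfree (le_imp_eq_of_not_eqvGen_le hfree htrans hxy) hne r⟩
  have hG : Nat.card G = 2 :=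
    (Nat.card_congr (Equiv.ofBijective _ (bijective_apply_of_regular hfree htrans x))).trans hP
  exact h2.false (mulEquivOfPrimeCardEq hG (by simp))

end RegularRepresentation

section RankShift

variable {P : Type*} [PartialOrder P] {rk : P → ℤ}

theorem exists_lt_of_eqvGen_le {x y : P} (hxy : EqvGen (· ≤ ·) x y) (hne : x ≠ y) :
    ∃ a b : P, a < b := by
  by_contra! h
  exact hne (hxy.apply_eq_apply (f := id) fun a b hab => hab.eq_of_not_lt (h a b))

variable (hrk : StrictMono rk) (hcov : ∀ x y : P, x ⋖ y → rk y = rk x + 1)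
  (hconn : ∀ x y : P, EqvGen (· ≤ ·) x y)
include hrk hcov hconn

theorem rank_apply_sub_eq (σ : P ≃o P) (x y : P) : rk (σ x) - rk x = rk (σ y) - rk y :=
  (hconn x y).apply_eq_apply (f := fun z => rk (σ z) - rk z) fun _ _ =>
    sub_eq_sub_of_le_of_covBy hrk hcov fun _ _ hab => hcov _ _ ((apply_covBy_apply_iff σ).2 hab)

theorem exists_rankShift_monoidHom [Nonempty P] :
    ∃ φ : (P ≃o P) →* Multiplicative ℤ, ∀ σ x, φ σ = .ofAdd (rk (σ x) - rk x) := by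
  obtain ⟨u⟩ := ‹Nonempty P›
  refine ⟨MonoidHom.mk' (fun σ => .ofAdd (rk (σ u) - rk u)) fun σ τ => ?_,
    fun σ x => congrArg Multiplicative.ofAdd (rank_apply_sub_eq hrk hcov hconn σ u x)⟩
  rw [← ofAdd_add, RelIso.mul_apply, rank_apply_sub_eq hrk hcov hconn σ u (τ u)]
  ring_nf

end RankShift

theorem MonoidHom.surjective_of_apply_eq_ofAdd_one {G : Type*} [Group G]
    {f : G →* Multiplicative ℤ} {g : G} (hg : f g = .ofAdd 1) : Function.Surjective f :=
  fun m => ⟨g ^ m.toAdd, by rw [map_zpow, hg, ← ofAdd_zsmul, smul_eq_mul, mul_one]; rfl⟩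

/-- If a group `G`, neither trivial nor `ℤ/2ℤ`, admits a graded
regular poset representation — a partial order `P` with `G ≃* Aut(P)`, the action free
and transitive, and a rank function `rk : P → ℤ` with `x < y → rk x < rk y` and
`rk y = rk x + 1` whenever `y` covers `x` — then `G` is indicable. -/
theorem indicable_of_graded_regular_rep (G : Type*) [Group G]
    (hnt : Nontrivial G) (h2 : IsEmpty (G ≃* Multiplicative (ZMod 2)))
    (P : Type*) [PartialOrder P] (ρ : G ≃* (P ≃o P))
    (hfree : ∀ (g : G) (p : P), ρ g p = p → g = 1)
    (htrans : ∀ p q : P, ∃ g : G, ρ g p = q)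
    (rk : P → ℤ)
    (hrk₁ : ∀ x y : P, x < y → rk x < rk y)
    (hrk₂ : ∀ x y : P, x ⋖ y → rk y = rk x + 1) :
    ∃ f : G →* Multiplicative ℤ, Function.Surjective f := by
  have hrk : StrictMono rk := fun x y => hrk₁ x y
  have hconn := eqvGen_le_of_regular hfree htrans h2
  obtain ⟨p, q, hpq⟩ := exists_ne_of_mulEquiv_orderIso ρ
  obtain ⟨a, b, hab⟩ := exists_lt_of_eqvGen_le (hconn p q) hpq
  obtain ⟨v, hav, -⟩ := TransGen.head'_iff.1 (hrk.transGen_covBy_of_lt hab)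
  have : Nonempty P := ⟨a⟩
  obtain ⟨φ, hφ⟩ := exists_rankShift_monoidHom hrk hrk₂ hconn
  obtain ⟨g, hg⟩ := htrans a v
  refine ⟨φ.comp ρ.toMonoidHom, MonoidHom.surjective_of_apply_eq_ofAdd_one (g := g) ?_⟩
  simp [hφ _ a, hg, hrk₂ a v hav]
end

section
/- Let G be a torsion group (every element has finite order) with more than two elements. Then G does not admit a regular poset representation: there is no partial order P and group isomorphism from G onto the group of order automorphisms of P such that the induced action of G on the underlying set of P is free and transitive. -/
universe u v

/-- A torsion group with more than two elements does not admit a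
regular poset representation (a partial order with `G ≃* Aut(P)` acting freely and
transitively). -/
theorem torsion_no_regular_rep (G : Type u) [Group G]
    (htor : ∀ g : G, IsOfFinOrder g)
    (hbig : ∃ a b c : G, a ≠ b ∧ a ≠ c ∧ b ≠ c) :
    ¬ ∃ (P : Type v) (_ : PartialOrder P) (ρ : G ≃* (P ≃o P)),
        (∀ (g : G) (p : P), ρ g p = p → g = 1) ∧ (∀ p q : P, ∃ g : G, ρ g p = q) := by
  classical
  rintro ⟨P, _, ρ, hfree, htrans⟩
  obtain ⟨a, b, c, hab, hac, hbc⟩ := hbig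
  -- P is nonempty
  have hP : Nonempty P := by
    by_contra h
    have hsub : Subsingleton (P ≃o P) := ⟨fun f g => by
      ext p; exact absurd ⟨p⟩ h⟩
    exact hab (ρ.injective (Subsingleton.elim _ _))
  obtain ⟨p₀⟩ := hP
  -- the order is trivial
  have htriv : ∀ p q : P, p ≤ q → p = q := by
    intro p q hpq
    obtain ⟨g, hg⟩ := htrans p q
    have key : ∀ k : ℕ, p ≤ ρ (g ^ k) p := by
      intro k
      induction k with
      | zero => simp
      | succ k ih =>
        have h1 : ρ g (ρ (g ^ k) p) = ρ (g ^ (k + 1)) p := by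
          rw [pow_succ']
          simp [map_mul]
        have h2 : ρ g p ≤ ρ g (ρ (g ^ k) p) := (ρ g).monotone ih
        calc p ≤ ρ g p := by rw [hg]; exact hpq
        _ ≤ _ := h2.trans h1.le
    have hn : 0 < orderOf g := (htor g).orderOf_pos
    have hle : ρ g p ≤ p := by
      have h1 := (ρ g).monotone (key (orderOf g - 1))
      have h2 : ρ g (ρ (g ^ (orderOf g - 1)) p) = p := by
        have heq : g * g ^ (orderOf g - 1) = g ^ orderOf g := by
          rw [← pow_succ']
          congr 1
          omega
        calc ρ g (ρ (g ^ (orderOf g - 1)) p)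
            = ρ (g * g ^ (orderOf g - 1)) p := by simp [map_mul]
          _ = ρ (g ^ orderOf g) p := by rw [heq]
          _ = p := by rw [pow_orderOf_eq_one]; simp
      calc ρ g p ≤ ρ g (ρ (g ^ (orderOf g - 1)) p) := h1
        _ = p := h2
    rw [← hg] at hpq ⊢
    exact le_antisymm hpq hle
  -- x ≤ y iff x = y
  have hiff : ∀ x y : P, x ≤ y ↔ x = y :=
    fun x y => ⟨htriv x y, fun h => h ▸ le_refl x⟩
  -- the orbit map is injective
  have hinj : ∀ g h : G, ρ g p₀ = ρ h p₀ → g = h := by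
    intro g h hgh
    have : ρ (h⁻¹ * g) p₀ = p₀ := by
      have e1 : ρ (h⁻¹ * g) p₀ = ρ h⁻¹ (ρ g p₀) := by simp [map_mul]
      have e2 : ρ h⁻¹ (ρ h p₀) = p₀ := by
        have : ρ h⁻¹ (ρ h p₀) = ρ (h⁻¹ * h) p₀ := by simp [map_mul]
        simpa using this
      rw [e1, hgh, e2]
    have := hfree _ _ this
    rwa [inv_mul_eq_one, eq_comm] at this
  set p := ρ a p₀ with hp
  set q := ρ b p₀ with hq
  set r := ρ c p₀ with hr
  have hpq : p ≠ q := fun h => hab (hinj _ _ h)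
  have hpr : p ≠ r := fun h => hac (hinj _ _ h)
  have hqr : q ≠ r := fun h => hbc (hinj _ _ h)
  -- the swap of p and q is an order automorphism
  let τ : P ≃o P :=
    { toEquiv := Equiv.swap p q
      map_rel_iff' := by
        intro x y
        simp only [Equiv.coe_fn_mk, hiff]
        exact (Equiv.swap p q).injective.eq_iff }
  have hτr : τ r = r := Equiv.swap_apply_of_ne_of_ne (Ne.symm hpr) (Ne.symm hqr)
  have h1 : ρ (ρ.symm τ) r = r := by rw [ρ.apply_symm_apply]; exact hτr
  have h2 : ρ.symm τ = 1 := hfree _ _ h1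
  have h3 : τ = 1 := by
    have := congrArg ρ h2
    rwa [ρ.apply_symm_apply, map_one] at this
  have : τ p = q := Equiv.swap_apply_left p q
  rw [h3] at this
  exact hpq this
end

section
/- Define a relation ⊴ on ℤ by a ⊴ b if and only if a = b or b − a ≥ 2. Then ⊴ is a partial order on ℤ, and the resulting poset P is a regular poset representation of ℤ via translations: every order automorphism of P is of the form x ↦ x + n for some n ∈ ℤ, the translation action is free and transitive, and moreover P is not graded (there is no function ρ : P → ℤ with a ◁ b implying ρ(a) < ρ(b) and ρ(b) = ρ(a) + 1 whenever b covers a). -/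
/-!
Translations preserve `b - a`, hence `⊴`. Conversely, an automorphism `φ` of `⊴` preserves
the relation `b - a ≥ 2` in both directions, and choosing `z` with `φ z = φ a - 2` shows that
it is monotone for the usual order; so `φ` is an order automorphism of `(ℤ, ≤)`, which commutes
with the successor `x ↦ x + 1` and is therefore a translation. `P` is not graded because `b`
covers `a` exactly when `b - a ∈ {2, 3}`: going from `0` to `6` by three steps of `2` and by
two steps of `3` would force `ρ 6 - ρ 0` to be both `3` and `2`.
-/

def tle (a b : ℤ) : Prop := a = b ∨ 2 ≤ b - a

lemma isPartialOrder_tle : IsPartialOrder ℤ tle where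
  refl _ := Or.inl rfl
  trans _ _ _ hab hbc := by unfold tle at *; omega
  antisymm _ _ hab hba := by unfold tle at *; omega

lemma tle_add_right_iff {a b : ℤ} (n : ℤ) : tle (a + n) (b + n) ↔ tle a b := by
  unfold tle; omega

def tleTranslation (n : ℤ) : tle ≃r tle :=
  ⟨Equiv.addRight n, tle_add_right_iff n⟩

section Automorphism

variable (φ : tle ≃r tle)

lemma tle_relIso_two_le_sub_iff (a b : ℤ) : 2 ≤ φ b - φ a ↔ 2 ≤ b - a := by
  have hφ : tle (φ a) (φ b) ↔ tle a b := φ.map_rel_iff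
  have hinj : φ a = φ b ↔ a = b := φ.injective.eq_iff
  unfold tle at hφ
  omega

lemma monotone_of_tle_relIso : Monotone φ := by
  intro a b hab
  obtain ⟨z, hz⟩ := φ.surjective (φ a - 2)
  have hza : 2 ≤ a - z := (tle_relIso_two_le_sub_iff φ z a).mp (by omega)
  have hzb : 2 ≤ φ b - φ z := (tle_relIso_two_le_sub_iff φ z b).mpr (by omega)
  omega

noncomputable def tleRelIsoToOrderIso : ℤ ≃o ℤ :=
  φ.toEquiv.toOrderIso (monotone_of_tle_relIso φ) (monotone_of_tle_relIso φ.symm)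

end Automorphism

lemma Int.orderIso_apply_eq_add (φ : ℤ ≃o ℤ) (x : ℤ) : φ x = x + φ 0 := by
  have hsucc (y : ℤ) : φ (y + 1) = φ y + 1 := by
    simpa only [Order.succ_eq_add_one] using φ.map_succ y
  induction x using Int.induction_on with
  | zero => simp
  | succ k ih => rw [hsucc, ih]; ring
  | pred k ih =>
    have h := hsucc (-(k : ℤ) - 1)
    rw [sub_add_cancel] at h
    omega

lemma tle_covers_of_two_le_sub_of_sub_le_three {a b : ℤ} (h2 : 2 ≤ b - a) (h3 : b - a ≤ 3) :
    tle a b ∧ a ≠ b ∧ ∀ c : ℤ, tle a c → tle c b → c = a ∨ c = b := by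
  refine ⟨Or.inr h2, by omega, fun c hac hcb => ?_⟩
  unfold tle at hac hcb
  omega

lemma not_graded_tle (ρ : ℤ → ℤ)
    (hcov : ∀ a b : ℤ,
      (tle a b ∧ a ≠ b ∧ ∀ c : ℤ, tle a c → tle c b → c = a ∨ c = b) → ρ b = ρ a + 1) :
    False := by
  have step (a b : ℤ) (h2 : 2 ≤ b - a) (h3 : b - a ≤ 3) : ρ b = ρ a + 1 :=
    hcov a b (tle_covers_of_two_le_sub_of_sub_le_three h2 h3)
  have via2 : ρ 6 = ρ 0 + 3 := by
    rw [step 4 6 le_rfl (by norm_num), step 2 4 le_rfl (by norm_num), step 0 2 le_rfl (by norm_num)]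
    ring
  have via3 : ρ 6 = ρ 0 + 2 := by
    rw [step 3 6 (by norm_num) le_rfl, step 0 3 (by norm_num) le_rfl]
    ring
  omega

/-- The relation `⊴` is a partial order on `ℤ`; every translation is
an order automorphism of the resulting poset `P` and, conversely, every order
automorphism of `P` is a translation `x ↦ x + n`; the translation action of `ℤ` is free
and transitive; and `P` is not graded: there is no `ρ : ℤ → ℤ` with `ρ a < ρ b`
whenever `a ◁ b` strictly, and `ρ b = ρ a + 1` whenever `b` covers `a`. -/
theorem tle_regular_rep_not_graded :
    IsPartialOrder ℤ tle ∧
    (∀ n : ℤ, ∃ φ : tle ≃r tle, ∀ x : ℤ, φ x = x + n) ∧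
    (∀ φ : tle ≃r tle, ∃ n : ℤ, ∀ x : ℤ, φ x = x + n) ∧
    (∀ n : ℤ, (∃ x : ℤ, x + n = x) → n = 0) ∧
    (∀ x y : ℤ, ∃ n : ℤ, x + n = y) ∧
    ¬ ∃ ρ : ℤ → ℤ,
        (∀ a b : ℤ, tle a b → a ≠ b → ρ a < ρ b) ∧
        (∀ a b : ℤ,
          (tle a b ∧ a ≠ b ∧ ∀ c : ℤ, tle a c → tle c b → c = a ∨ c = b) →
          ρ b = ρ a + 1) := by
  refine ⟨isPartialOrder_tle, fun n => ⟨tleTranslation n, fun _ => rfl⟩,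
    fun φ => ⟨φ 0, Int.orderIso_apply_eq_add (tleRelIsoToOrderIso φ)⟩, ?_, fun x y => ⟨y - x, by ring⟩, ?_⟩
  · rintro n ⟨x, hx⟩
    omega
  · rintro ⟨ρ, -, hcov⟩
    exact not_graded_tle ρ hcov
end
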